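/- arXiv:1009.4918 — 3 statements merged into one kernel-verified Lean document; each statement's English description precedes it below -/
import Mathlib

section
/- Let W0 be the finite group of linear isometries of ℝ^n generated by the reflections r_α for α in a crystallographic root system Φ spanning ℝ^n. Then for every w ∈ W0, the reflection length ℓ_{R0}(w) equals n minus the dimension of the subspace {x ∈ ℝ^n : w(x) = x} of vectors fixed by w. -/
open RealInnerProductSpace

noncomputable section

/-- A crystallographic (reduced) root system spanning `ℝⁿ`. -/
structure IsRootSystem (n : ℕ) (Φ : Set (EuclideanSpace ℝ (Fin n))) : Prop where
  finite : Φ.Finite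
  nonzero : ∀ α ∈ Φ, α ≠ 0
  spans : Submodule.span ℝ Φ = ⊤
  reflect_mem : ∀ α ∈ Φ, ∀ β ∈ Φ, β - (2 * ⟪β, α⟫ / ⟪α, α⟫) • α ∈ Φ
  crystallographic : ∀ α ∈ Φ, ∀ β ∈ Φ, ∃ z : ℤ, (z : ℝ) = 2 * ⟪β, α⟫ / ⟪α, α⟫
  reduced : ∀ α ∈ Φ, ∀ c : ℝ, c • α ∈ Φ → c = 1 ∨ c = -1

/-- The coroot `α∨ = (2/⟨α,α⟩) α`. -/
def coroot {n : ℕ} (α : EuclideanSpace ℝ (Fin n)) : EuclideanSpace ℝ (Fin n) :=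
  (2 / ⟪α, α⟫) • α

lemma affRefl_involutive {n : ℕ} (α : EuclideanSpace ℝ (Fin n)) (i : ℤ) :
    Function.Involutive
      (fun x : EuclideanSpace ℝ (Fin n) => x - (⟪x, α⟫ - (i : ℝ)) • coroot α) := by
  intro x
  by_cases h : ⟪α, α⟫ = 0
  · simp only [coroot, h, div_zero, zero_smul, smul_zero, sub_zero]
  · have hv : ⟪coroot α, α⟫ = 2 := by
      rw [coroot, real_inner_smul_left, div_mul_cancel₀ _ h]
    dsimp only
    rw [inner_sub_left, real_inner_smul_left, hv]
    module

/-- The affine reflection `r_{α,i}` across the hyperplane `{x : ⟨x,α⟩ = i}`,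
as a permutation of `ℝⁿ`. -/
def affRefl {n : ℕ} (α : EuclideanSpace ℝ (Fin n)) (i : ℤ) :
    Equiv.Perm (EuclideanSpace ℝ (Fin n)) :=
  (affRefl_involutive α i).toPerm _

/-- The set `R` of all affine reflections `r_{α,i}`, `α ∈ Φ`, `i ∈ ℤ`. -/
def affR {n : ℕ} (Φ : Set (EuclideanSpace ℝ (Fin n))) :
    Set (Equiv.Perm (EuclideanSpace ℝ (Fin n))) :=
  {w | ∃ α ∈ Φ, ∃ i : ℤ, w = affRefl α i}

/-- The affine Coxeter group `W` generated by all affine reflections. -/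
def affW {n : ℕ} (Φ : Set (EuclideanSpace ℝ (Fin n))) :
    Subgroup (Equiv.Perm (EuclideanSpace ℝ (Fin n))) :=
  Subgroup.closure (affR Φ)

/-- The set `R₀ = {r_{α,0} : α ∈ Φ}` of reflections through the origin. -/
def linR {n : ℕ} (Φ : Set (EuclideanSpace ℝ (Fin n))) :
    Set (Equiv.Perm (EuclideanSpace ℝ (Fin n))) :=
  {w | ∃ α ∈ Φ, w = affRefl α 0}

/-- The finite reflection group `W₀` generated by the reflections fixing the origin. -/
def linW {n : ℕ} (Φ : Set (EuclideanSpace ℝ (Fin n))) :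
    Subgroup (Equiv.Perm (EuclideanSpace ℝ (Fin n))) :=
  Subgroup.closure (linR Φ)

/-- The translation `t_λ : x ↦ x + λ` as a permutation of `ℝⁿ`. -/
def transPerm {n : ℕ} (lam : EuclideanSpace ℝ (Fin n)) :
    Equiv.Perm (EuclideanSpace ℝ (Fin n)) :=
  Equiv.addRight lam

/-- The coroot lattice `L = ℤΦ∨`: all integral linear combinations of coroots. -/
def corootLattice {n : ℕ} (Φ : Set (EuclideanSpace ℝ (Fin n))) :
    AddSubgroup (EuclideanSpace ℝ (Fin n)) :=
  AddSubgroup.closure (coroot '' Φ)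

/-- The word length of `w` with respect to a set `R`: the minimal `m` such that `w`
is a product of `m` elements of `R` (`⊤` if there is no such product). -/
def wordLength {G : Type*} [Monoid G] (R : Set G) (w : G) : ℕ∞ :=
  sInf {m : ℕ∞ | ∃ l : List G, (∀ r ∈ l, r ∈ R) ∧ l.prod = w ∧ (l.length : ℕ∞) = m}

/-- `λ` has integral dimension `k` iff `k` is least such that `λ` is an integral
combination of `k` coroots. -/
def intDim {n : ℕ} (Φ : Set (EuclideanSpace ℝ (Fin n)))
    (lam : EuclideanSpace ℝ (Fin n)) : ℕ :=
  sInf {k : ℕ | ∃ (c : Fin k → ℤ) (α : Fin k → EuclideanSpace ℝ (Fin n)),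
    (∀ i, α i ∈ Φ) ∧ lam = ∑ i, c i • coroot (α i)}

/-- `λ` has real dimension `k` iff `k` is the least dimension of a subspace of `ℝⁿ`
spanned by a set of coroots and containing `λ`. -/
def realDim {n : ℕ} (Φ : Set (EuclideanSpace ℝ (Fin n)))
    (lam : EuclideanSpace ℝ (Fin n)) : ℕ :=
  sInf {k : ℕ | ∃ S : Set (EuclideanSpace ℝ (Fin n)), S ⊆ coroot '' Φ ∧
    lam ∈ Submodule.span ℝ S ∧ Module.finrank ℝ ↥(Submodule.span ℝ S) = k}

namespace CarterProof

variable {n : ℕ}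

local notation "V" => EuclideanSpace ℝ (Fin n)

lemma affRefl_apply (α : V) (x : V) :
    affRefl α 0 x = x - ⟪x, α⟫ • coroot α := by
  show x - (⟪x, α⟫ - ((0:ℤ):ℝ)) • coroot α = _
  norm_num

lemma affRefl_apply' (α : V) (x : V) :
    affRefl α 0 x = x - (2 * ⟪x, α⟫ / ⟪α, α⟫) • α := by
  rw [affRefl_apply, coroot, smul_smul]
  ring_nf

lemma inner_self_pos' {α : V} (hα : α ≠ 0) : 0 < ⟪α, α⟫ := by
  rw [real_inner_self_eq_norm_sq]
  exact pow_pos (norm_pos_iff.mpr hα) 2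

lemma affRefl_mul_self (α : V) : affRefl α 0 * affRefl α 0 = 1 :=
  Equiv.ext fun x => (affRefl_involutive α 0) x

lemma affRefl_inv (α : V) : (affRefl α 0)⁻¹ = affRefl α 0 :=
  inv_eq_of_mul_eq_one_left (affRefl_mul_self α)

lemma affRefl_fix {α : V} {x : V} (h : ⟪x, α⟫ = 0) : affRefl α 0 x = x := by
  rw [affRefl_apply, h]; simp

lemma affRefl_self {α : V} (hα : α ≠ 0) : affRefl α 0 α = -α := by
  have h : ⟪α, α⟫ ≠ 0 := (inner_self_pos' hα).ne'
  rw [affRefl_apply']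
  rw [mul_div_assoc, div_self h, mul_one]
  module

/-- Elements of the reflection group: isometric, linear, stabilize `Φ`. -/
structure Good (Φ : Set V) (w : Equiv.Perm V) : Prop where
  isom : ∀ a b : V, ⟪w a, w b⟫ = ⟪a, b⟫
  lins : ∀ (c : ℝ) (a b : V), w (c • a + b) = c • w a + w b
  maps : ∀ α ∈ Φ, w α ∈ Φ

namespace Good

lemma map_zero {Φ : Set V} {w : Equiv.Perm V} (h : Good Φ w) : w 0 = 0 := by
  have h1 := h.lins 1 0 0
  simp only [smul_zero, add_zero, one_smul] at h1
  have h2 : w 0 + w 0 = w 0 + 0 := by rw [add_zero]; exact h1.symm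
  exact add_left_cancel h2

lemma map_smul {Φ : Set V} {w : Equiv.Perm V} (h : Good Φ w) (c : ℝ) (a : V) : w (c • a) = c • w a := by
  have h1 := h.lins c a 0
  rw [add_zero, h.map_zero, add_zero] at h1
  exact h1

lemma map_add {Φ : Set V} {w : Equiv.Perm V} (h : Good Φ w) (a b : V) : w (a + b) = w a + w b := by
  have h1 := h.lins 1 a b
  simpa using h1

lemma map_neg {Φ : Set V} {w : Equiv.Perm V} (h : Good Φ w) (a : V) : w (-a) = -(w a) := by
  have h1 := h.map_smul (-1) a
  simpa using h1

lemma map_sub {Φ : Set V} {w : Equiv.Perm V} (h : Good Φ w) (a b : V) : w (a - b) = w a - w b := by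
  rw [sub_eq_add_neg, sub_eq_add_neg, h.map_add, h.map_neg]

lemma one {Φ : Set V} : Good Φ (1 : Equiv.Perm V) :=
  ⟨fun _ _ => rfl, fun _ _ _ => rfl, fun _ hα => hα⟩

lemma mul {Φ : Set V} {u v : Equiv.Perm V} (hu : Good Φ u) (hv : Good Φ v) : Good Φ (u * v) := by
  refine ⟨fun a b => ?_, fun c a b => ?_, fun α hα => ?_⟩
  · show ⟪u (v a), u (v b)⟫ = ⟪a, b⟫
    rw [hu.isom, hv.isom]
  · show u (v (c • a + b)) = c • u (v a) + u (v b)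
    rw [hv.lins, hu.lins]
  · exact hu.maps _ (hv.maps _ hα)

lemma inv {Φ : Set V} {w : Equiv.Perm V} (hΦ : Φ.Finite) (h : Good Φ w) : Good Φ w⁻¹ := by
  have hmaps : ∀ α ∈ Φ, w⁻¹ α ∈ Φ := by
    have himg : w '' Φ = Φ := by
      apply Set.eq_of_subset_of_ncard_le ?_ ?_ hΦ
      · intro y hy
        obtain ⟨α, hα, rfl⟩ := hy
        exact h.maps _ hα
      · rw [Set.ncard_image_of_injective _ w.injective]
    intro α hα
    rw [← himg] at hα
    obtain ⟨β, hβ, hβα⟩ := hα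
    have hb : w⁻¹ α = β := by rw [← hβα]; simp
    rw [hb]; exact hβ
  refine ⟨fun a b => ?_, fun c a b => ?_, hmaps⟩
  · have h1 := h.isom (w⁻¹ a) (w⁻¹ b)
    simpa using h1.symm
  · apply w.injective
    rw [show w (w⁻¹ (c • a + b)) = c • a + b from w.apply_symm_apply _]
    rw [h.lins]
    simp

end Good

lemma good_affRefl {Φ : Set V} {α : V} (hα : α ∈ Φ)
    (hmem : ∀ β ∈ Φ, β - (2 * ⟪β, α⟫ / ⟪α, α⟫) • α ∈ Φ) :
    Good Φ (affRefl α 0) := by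
  by_cases hA : ⟪α, α⟫ = 0
  · have hid : ∀ x : V, affRefl α 0 x = x := by
      intro x; rw [affRefl_apply, coroot, hA]; simp
    exact ⟨fun a b => by rw [hid, hid], fun c a b => by rw [hid, hid, hid],
      fun β hβ => by rw [hid]; exact hβ⟩
  refine ⟨fun a b => ?_, fun c a b => ?_, fun β hβ => ?_⟩
  · rw [affRefl_apply' α a, affRefl_apply' α b]
    simp only [inner_sub_left, inner_sub_right, real_inner_smul_left, real_inner_smul_right]
    rw [real_inner_comm α a, real_inner_comm α b]
    set s := (⟪a, b⟫ : ℝ) with hs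
    set p := (⟪a, α⟫ : ℝ) with hp
    set q := (⟪b, α⟫ : ℝ) with hq
    set A := (⟪α, α⟫ : ℝ) with hA2
    field_simp
    ring
  · rw [affRefl_apply' α (c • a + b), affRefl_apply' α a, affRefl_apply' α b]
    rw [inner_add_left, real_inner_smul_left]
    rw [smul_sub, smul_smul, sub_add_sub_comm, ← add_smul]
    congr 1
    field_simp
  · have h1 := hmem β hβ
    rwa [← affRefl_apply'] at h1

lemma good_of_mem_linW {Φ : Set V} (hfin : Φ.Finite)
    (hmem : ∀ α ∈ Φ, ∀ β ∈ Φ, β - (2 * ⟪β, α⟫ / ⟪α, α⟫) • α ∈ Φ)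
    {w : Equiv.Perm V} (hw : w ∈ linW Φ) : Good Φ w := by
  induction hw using Subgroup.closure_induction with
  | mem r hr =>
      obtain ⟨α, hα, rfl⟩ := hr
      exact good_affRefl hα (hmem α hα)
  | one => exact Good.one
  | mul u v hu hv hgu hgv => exact hgu.mul hgv
  | inv u hu hgu => exact hgu.inv hfin

/-- The fixed subspace of a `Good` permutation. -/
def FixSub {Φ : Set V} {w : Equiv.Perm V} (h : Good Φ w) : Submodule ℝ V where
  carrier := {v | w v = v}
  add_mem' := by
    intro a b ha hb
    simp only [Set.mem_setOf_eq] at *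
    rw [h.map_add, ha, hb]
  zero_mem' := h.map_zero
  smul_mem' := by
    intro c a ha
    simp only [Set.mem_setOf_eq] at *
    rw [h.map_smul, ha]

lemma mem_FixSub {Φ : Set V} {w : Equiv.Perm V} (h : Good Φ w) (v : V) :
    v ∈ FixSub h ↔ w v = v := Iff.rfl

lemma span_fix_eq {Φ : Set V} {w : Equiv.Perm V} (h : Good Φ w) :
    Submodule.span ℝ {v : V | w v = v} = FixSub h := by
  apply le_antisymm
  · rw [Submodule.span_le]
    intro v hv
    exact hv
  · intro v hv
    exact Submodule.subset_span hv

/-- Conjugation of a reflection by a good permutation. -/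
lemma conj_affRefl {Φ : Set V} {u : Equiv.Perm V} (hu : Good Φ u) (γ : V) :
    u * affRefl γ 0 * u⁻¹ = affRefl (u γ) 0 := by
  apply Equiv.ext
  intro z
  show u (affRefl γ 0 (u⁻¹ z)) = affRefl (u γ) 0 z
  rw [affRefl_apply, affRefl_apply]
  have hc : u (coroot γ) = coroot (u γ) := by
    rw [coroot, coroot, hu.map_smul, hu.isom]
  have hinner : ⟪u⁻¹ z, γ⟫ = ⟪z, u γ⟫ := by
    have := hu.isom (u⁻¹ z) γ
    rw [show u (u⁻¹ z) = z from u.apply_symm_apply z] at this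
    exact this.symm
  rw [hu.map_sub, hu.map_smul, hc, hinner, show u (u⁻¹ z) = z from u.apply_symm_apply z]

lemma affRefl_neg (α : V) : affRefl (-α) 0 = affRefl α 0 := by
  apply Equiv.ext
  intro z
  rw [affRefl_apply, affRefl_apply]
  have : coroot (-α) = -coroot α := by
    rw [coroot, coroot]
    simp [inner_neg_neg]
  rw [this, inner_neg_right]
  simp

/-- products of a list of elements of `linR` are good. -/
lemma list_prod_mem_linW {Φ : Set V} {l : List (Equiv.Perm V)}
    (hl : ∀ r ∈ l, r ∈ linR Φ) : l.prod ∈ linW Φ := by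
  apply Subgroup.list_prod_mem
  intro r hr
  exact Subgroup.subset_closure (hl r hr)

/-- membership in a closure of a symmetric set gives a word. -/
lemma exists_word {S : Set (Equiv.Perm V)} (hS : ∀ s ∈ S, s⁻¹ ∈ S)
    {w : Equiv.Perm V} (hw : w ∈ Subgroup.closure S) :
    ∃ l : List (Equiv.Perm V), (∀ r ∈ l, r ∈ S) ∧ l.prod = w := by
  induction hw using Subgroup.closure_induction with
  | mem r hr => exact ⟨[r], by simpa using hr, by simp⟩
  | one => exact ⟨[], by simp, by simp⟩
  | mul u v hu hv hgu hgv =>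
      obtain ⟨l1, hl1, hp1⟩ := hgu
      obtain ⟨l2, hl2, hp2⟩ := hgv
      refine ⟨l1 ++ l2, ?_, by rw [List.prod_append, hp1, hp2]⟩
      intro r hr
      rcases List.mem_append.1 hr with h | h
      · exact hl1 r h
      · exact hl2 r h
  | inv u hu hgu =>
      obtain ⟨l, hl, hp⟩ := hgu
      refine ⟨(l.map (·⁻¹)).reverse, ?_, by rw [← List.prod_inv_reverse, hp]⟩
      intro r hr
      rw [List.mem_reverse, List.mem_map] at hr
      obtain ⟨a, ha, rfl⟩ := hr
      exact hS a (hl a ha)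

lemma neg_mem_root {Φ : Set V} (hΦ : IsRootSystem n Φ) {α : V} (hα : α ∈ Φ) : -α ∈ Φ := by
  have hA : (⟪α, α⟫ : ℝ) ≠ 0 := (inner_self_pos' (hΦ.nonzero α hα)).ne'
  have h := hΦ.reflect_mem α hα α hα
  rw [mul_div_assoc, div_self hA, mul_one, two_smul] at h
  have : α - (α + α) = -α := by module
  rwa [this] at h

lemma refl_mem_root {Φ : Set V} (hΦ : IsRootSystem n Φ) {α β : V} (hα : α ∈ Φ) (hβ : β ∈ Φ) :
    affRefl α 0 β ∈ Φ := by
  rw [affRefl_apply']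
  exact hΦ.reflect_mem α hα β hβ

/-- crystallographic pair lemma : if `⟪α, β⟫ > 0` and `α ≠ β` then `α - β ∈ Φ`. -/
lemma pair_lemma {Φ : Set V} (hΦ : IsRootSystem n Φ) {α β : V} (hα : α ∈ Φ) (hβ : β ∈ Φ)
    (hne : α ≠ β) (hpos : 0 < ⟪α, β⟫) : α - β ∈ Φ := by
  have hα0 := hΦ.nonzero α hα
  have hβ0 := hΦ.nonzero β hβ
  have hA : (0:ℝ) < ⟪α, α⟫ := inner_self_pos' hα0
  have hB : (0:ℝ) < ⟪β, β⟫ := inner_self_pos' hβ0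
  obtain ⟨p, hp⟩ := hΦ.crystallographic α hα β hβ  -- p = 2⟪β,α⟫/⟪α,α⟫
  obtain ⟨q, hq⟩ := hΦ.crystallographic β hβ α hα  -- q = 2⟪α,β⟫/⟪β,β⟫
  have hip : (0:ℝ) < ⟪β, α⟫ := by rwa [real_inner_comm] at hpos
  have hp_pos : (0:ℝ) < p := by
    rw [hp]; positivity
  have hq_pos : (0:ℝ) < q := by
    rw [hq]; positivity
  have hp1 : (1:ℤ) ≤ p := by exact_mod_cast hp_pos
  have hq1 : (1:ℤ) ≤ q := by exact_mod_cast hq_pos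
  -- if both ≥ 2, Cauchy-Schwarz equality forces β = α
  by_cases hcase : (p : ℝ) = 1
  · -- r_α β = β - α ∈ Φ, so α - β ∈ Φ
    have h := hΦ.reflect_mem α hα β hβ
    rw [← hp, hcase, one_smul] at h
    have := neg_mem_root hΦ h
    rwa [neg_sub] at this
  · by_cases hcase2 : (q : ℝ) = 1
    · have h := hΦ.reflect_mem β hβ α hα
      rwa [← hq, hcase2, one_smul] at h
    · exfalso
      have hp2 : (2:ℝ) ≤ p := by
        have : (1:ℤ) < p := lt_of_le_of_ne hp1 (by
          intro hcontra; apply hcase; rw [← hcontra]; norm_num)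
        exact_mod_cast this
      have hq2 : (2:ℝ) ≤ q := by
        have : (1:ℤ) < q := lt_of_le_of_ne hq1 (by
          intro hcontra; apply hcase2; rw [← hcontra]; norm_num)
        exact_mod_cast this
      -- pq ≥ 4 gives ⟪α,β⟫² ≥ ⟪α,α⟫⟪β,β⟫; Cauchy-Schwarz gives ≤, so equality
      have hprod : (4:ℝ) ≤ (p:ℝ) * q := by nlinarith
      have hpq : (p:ℝ) * q = 4 * (⟪α,β⟫ * ⟪α,β⟫) / (⟪α,α⟫ * ⟪β,β⟫) := by
        rw [hp, hq, real_inner_comm β α]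
        field_simp
        ring
      have hCS : ⟪α,β⟫ * ⟪α,β⟫ ≤ ⟪α,α⟫ * ⟪β,β⟫ := real_inner_mul_inner_self_le α β
      have heq : ⟪α,β⟫ * ⟪α,β⟫ = ⟪α,α⟫ * ⟪β,β⟫ := by
        rw [hpq] at hprod
        have hT : (0:ℝ) < ⟪α,α⟫ * ⟪β,β⟫ := by positivity
        rw [le_div_iff₀ hT] at hprod
        nlinarith
      -- equality in Cauchy-Schwarz: β is a multiple of α
      have hnorm : ⟪α,β⟫ = ‖α‖ * ‖β‖ := by
        have h1 : ⟪α,β⟫ * ⟪α,β⟫ = (‖α‖ * ‖β‖) * (‖α‖ * ‖β‖) := by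
          rw [heq, real_inner_self_eq_norm_mul_norm, real_inner_self_eq_norm_mul_norm]; ring
        nlinarith [norm_nonneg α, norm_nonneg β, mul_nonneg (norm_nonneg α) (norm_nonneg β)]
      rw [inner_eq_norm_mul_iff_real] at hnorm
      -- ‖β‖ • α = ‖α‖ • β
      have hβα : β = (‖β‖ / ‖α‖) • α := by
        have hα' : ‖α‖ ≠ 0 := norm_ne_zero_iff.2 hα0
        rw [div_eq_inv_mul, mul_smul, hnorm, smul_smul, inv_mul_cancel₀ hα', one_smul]
      have hc := hΦ.reduced α hα (‖β‖ / ‖α‖) (by rw [← hβα]; exact hβ)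
      rcases hc with h1 | h1
      · apply hne
        rw [hβα, h1, one_smul]
      · have : (0:ℝ) < ‖β‖ / ‖α‖ := by positivity
        rw [h1] at this
        norm_num at this

/-! ### Positive systems relative to a regular point -/

def Pos (Φ : Set V) (x : V) : Set V := {α | α ∈ Φ ∧ 0 < ⟪x, α⟫}

def Simp (Φ : Set V) (x : V) : Set V :=
  {α | α ∈ Pos Φ x ∧ ∀ β ∈ Pos Φ x, ∀ γ ∈ Pos Φ x, α ≠ β + γ}

lemma Simp_subset_Pos {Φ : Set V} {x : V} : Simp Φ x ⊆ Pos Φ x := fun _ h => h.1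

lemma Pos_subset {Φ : Set V} {x : V} : Pos Φ x ⊆ Φ := fun _ h => h.1

lemma simple_inner_nonpos {Φ : Set V} {x : V} (hΦ : IsRootSystem n Φ)
    (hx : ∀ α ∈ Φ, ⟪x, α⟫ ≠ 0) {δ δ' : V} (hδ : δ ∈ Simp Φ x) (hδ' : δ' ∈ Simp Φ x)
    (hne : δ ≠ δ') : ⟪δ, δ'⟫ ≤ 0 := by
  by_contra hpos
  push_neg at hpos
  have hd : δ - δ' ∈ Φ := pair_lemma hΦ hδ.1.1 hδ'.1.1 hne hpos
  rcases lt_or_gt_of_ne (hx _ hd) with hneg | hpos2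
  · -- ⟪x, δ - δ'⟫ < 0 : δ' = (δ' - δ) + δ decomposes δ'
    have hd' : δ' - δ ∈ Φ := by
      have := neg_mem_root hΦ hd
      rwa [neg_sub] at this
    have hd'P : δ' - δ ∈ Pos Φ x := by
      refine ⟨hd', ?_⟩
      rw [inner_sub_right]
      rw [inner_sub_right] at hneg
      linarith
    exact hδ'.2 _ hd'P _ hδ.1 (by module)
  · have hdP : δ - δ' ∈ Pos Φ x := ⟨hd, hpos2⟩
    exact hδ.2 _ hdP _ hδ'.1 (by module)

/-- nonnegative combination of simple roots -/
def IsNN (Φ : Set V) (x : V) (F : Finset V) (β : V) : Prop :=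
  ∃ c : V → ℝ, (∀ v, 0 ≤ c v) ∧ (∀ v, c v ≠ 0 → v ∈ Simp Φ x) ∧ β = ∑ v ∈ F, c v • v

lemma zero_coeffs {Φ : Set V} {x : V} (hΦ : IsRootSystem n Φ)
    (hx : ∀ α ∈ Φ, ⟪x, α⟫ ≠ 0) (c : V → ℝ)
    (hsupp : ∀ v, c v ≠ 0 → v ∈ Simp Φ x)
    (hsum : ∑ v ∈ hΦ.finite.toFinset, c v • v = 0) : ∀ v, c v = 0 := by
  classical
  set F := hΦ.finite.toFinset with hF
  set P := F.filter (fun v => 0 < c v) with hP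
  set N := F.filter (fun v => c v < 0) with hN
  have hsplit : ∑ v ∈ P, c v • v + ∑ v ∈ N, c v • v = 0 := by
    rw [← hsum]
    rw [← Finset.sum_filter_add_sum_filter_not F (fun v => 0 < c v)]
    congr 1
    apply Finset.sum_subset
    · intro v hv
      rw [hN, Finset.mem_filter] at hv
      rw [Finset.mem_filter]
      exact ⟨hv.1, not_lt.mpr hv.2.le⟩
    · intro v hv hvn
      rw [Finset.mem_filter, not_lt] at hv
      rw [hN, Finset.mem_filter] at hvn
      push_neg at hvn
      have h0 : c v = 0 := le_antisymm hv.2 (hvn hv.1)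
      rw [h0, zero_smul]
  set u : V := ∑ v ∈ P, c v • v with hu
  have huN : u = -∑ v ∈ N, c v • v := by
    rw [eq_neg_iff_add_eq_zero]
    exact hsplit
  -- each pair p ∈ P, q ∈ N has ⟪p, q⟫ ≤ 0
  have hpair : ∀ p ∈ P, ∀ q ∈ N, ⟪p, q⟫ ≤ 0 := by
    intro p hp q hq
    simp only [hP, Finset.mem_filter] at hp
    simp only [hN, Finset.mem_filter] at hq
    have hps : p ∈ Simp Φ x := hsupp p hp.2.ne'
    have hqs : q ∈ Simp Φ x := hsupp q hq.2.ne
    have hpq : p ≠ q := by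
      intro h; rw [h] at hp; linarith [hp.2, hq.2]
    exact simple_inner_nonpos hΦ hx hps hqs hpq
  have huu : ⟪u, u⟫ ≤ 0 := by
    have hstep : ⟪u, u⟫ = ⟪(∑ v ∈ P, c v • v : V), -∑ v ∈ N, c v • v⟫ := by
      rw [← huN, ← hu]
    rw [hstep]
    rw [inner_neg_right, sum_inner]
    rw [neg_nonpos]
    apply Finset.sum_nonneg
    intro p hp
    rw [real_inner_smul_left, inner_sum]
    simp only [hP, Finset.mem_filter] at hp
    apply mul_nonneg hp.2.le
    apply Finset.sum_nonneg
    intro q hq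
    rw [real_inner_smul_right]
    have hq' := hq
    simp only [hN, Finset.mem_filter] at hq'
    have := hpair p (by simp only [hP, Finset.mem_filter]; exact hp) q hq
    nlinarith [hq'.2]
  have hu0 : u = 0 := by
    have : ⟪u, u⟫ = 0 := le_antisymm huu real_inner_self_nonneg
    exact inner_self_eq_zero.1 this
  have hPempty : ∀ p ∈ P, False := by
    intro p hp
    have hxu : ⟪x, u⟫ = 0 := by rw [hu0, inner_zero_right]
    rw [hu, inner_sum] at hxu
    have hterms : ∀ q ∈ P, 0 ≤ ⟪x, c q • q⟫ := by
      intro q hq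
      simp only [hP, Finset.mem_filter] at hq
      have hqs : q ∈ Simp Φ x := hsupp q hq.2.ne'
      rw [real_inner_smul_right]
      exact mul_nonneg hq.2.le hqs.1.2.le
    have hplt : 0 < ⟪x, c p • p⟫ := by
      have hp' := hp
      simp only [hP, Finset.mem_filter] at hp'
      have hps : p ∈ Simp Φ x := hsupp p hp'.2.ne'
      rw [real_inner_smul_right]
      exact mul_pos hp'.2 hps.1.2
    have : 0 < ∑ q ∈ P, ⟪x, c q • q⟫ := by
      apply Finset.sum_pos' hterms ⟨p, hp, hplt⟩
    linarith [hxu ▸ this]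
  have hNempty : ∀ q ∈ N, False := by
    intro q hq
    have hNsum : ∑ v ∈ N, c v • v = 0 := by
      have h1 := huN
      rw [hu0] at h1
      exact neg_eq_zero.1 h1.symm
    have hxu : ⟪x, ∑ v ∈ N, c v • v⟫ = 0 := by rw [hNsum, inner_zero_right]
    rw [inner_sum] at hxu
    have hterms : ∀ v ∈ N, 0 ≤ -⟪x, c v • v⟫ := by
      intro v hv
      simp only [hN, Finset.mem_filter] at hv
      have hvs : v ∈ Simp Φ x := hsupp v hv.2.ne
      rw [real_inner_smul_right]
      nlinarith [hvs.1.2, hv.2]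
    have hqlt : 0 < -⟪x, c q • q⟫ := by
      have hq' := hq
      simp only [hN, Finset.mem_filter] at hq'
      have hqs : q ∈ Simp Φ x := hsupp q hq'.2.ne
      rw [real_inner_smul_right]
      nlinarith [hqs.1.2, hq'.2]
    have hpos : 0 < ∑ v ∈ N, -⟪x, c v • v⟫ :=
      Finset.sum_pos' hterms ⟨q, hq, hqlt⟩
    rw [Finset.sum_neg_distrib] at hpos
    rw [hxu] at hpos
    norm_num at hpos
  intro v
  by_contra hv
  have hvS : v ∈ Simp Φ x := hsupp v hv
  have hvF : v ∈ F := by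
    rw [hF, Set.Finite.mem_toFinset]
    exact hvS.1.1
  rcases lt_or_gt_of_ne hv with h | h
  · exact hNempty v (by simp only [hN, Finset.mem_filter]; exact ⟨hvF, h⟩)
  · exact hPempty v (by simp only [hP, Finset.mem_filter]; exact ⟨hvF, h⟩)

lemma measure_lt {Φ : Set V} {x : V} (hΦ : IsRootSystem n Φ) {b β : V}
    (hbF : b ∈ Φ) (hβF : β ∈ Φ) (hlt : ⟪x, b⟫ < ⟪x, β⟫) :
    ((hΦ.finite.toFinset).filter (fun γ => ⟪x, γ⟫ < ⟪x, b⟫)).card <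
      ((hΦ.finite.toFinset).filter (fun γ => ⟪x, γ⟫ < ⟪x, β⟫)).card := by
  classical
  apply Finset.card_lt_card
  rw [Finset.ssubset_iff_of_subset]
  · refine ⟨b, ?_, ?_⟩
    · rw [Finset.mem_filter]
      exact ⟨(Set.Finite.mem_toFinset _).2 hbF, hlt⟩
    · rw [Finset.mem_filter]
      rintro ⟨-, h⟩
      exact lt_irrefl _ h
  · intro γ hγ
    rw [Finset.mem_filter] at hγ ⊢
    exact ⟨hγ.1, hγ.2.trans hlt⟩

lemma rep_of_pos {Φ : Set V} {x : V} (hΦ : IsRootSystem n Φ)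
    (hx : ∀ α ∈ Φ, ⟪x, α⟫ ≠ 0) :
    ∀ β ∈ Pos Φ x, IsNN Φ x hΦ.finite.toFinset β := by
  classical
  have H : ∀ k : ℕ, ∀ β ∈ Pos Φ x,
      ((hΦ.finite.toFinset).filter (fun γ => ⟪x, γ⟫ < ⟪x, β⟫)).card < k →
      IsNN Φ x hΦ.finite.toFinset β := by
    intro k
    induction k with
    | zero => intro β hβ hk; omega
    | succ k ih =>
      intro β hβ hk
      by_cases hs : β ∈ Simp Φ x
      · refine ⟨fun v => if v = β then 1 else 0, ?_, ?_, ?_⟩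
        · intro v; dsimp only; split <;> norm_num
        · intro v hv
          dsimp only at hv
          by_cases h : v = β
          · rw [h]; exact hs
          · simp [h] at hv
        · dsimp only
          have hrw : ∀ v ∈ hΦ.finite.toFinset,
              (if v = β then (1:ℝ) else 0) • v = if v = β then v else 0 := by
            intro v _; split <;> simp
          rw [Finset.sum_congr rfl hrw]
          rw [Finset.sum_ite_eq' hΦ.finite.toFinset β (fun v => v)]
          rw [if_pos ((Set.Finite.mem_toFinset _).2 hβ.1)]
      · have hdec : ∃ b ∈ Pos Φ x, ∃ g ∈ Pos Φ x, β = b + g := by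
          by_contra hcon
          push_neg at hcon
          exact hs ⟨hβ, fun b hb g hg => hcon b hb g hg⟩
        obtain ⟨b, hb, g, hg, hbg⟩ := hdec
        have hxβ : ⟪x, β⟫ = ⟪x, b⟫ + ⟪x, g⟫ := by rw [hbg, inner_add_right]
        have hblt : ⟪x, b⟫ < ⟪x, β⟫ := by linarith [hg.2]
        have hglt : ⟪x, g⟫ < ⟪x, β⟫ := by linarith [hb.2]
        have hmb := measure_lt hΦ hb.1 hβ.1 hblt
        have hmg := measure_lt hΦ hg.1 hβ.1 hglt
        obtain ⟨c1, hc1n, hc1s, hc1⟩ := ih b hb (by omega)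
        obtain ⟨c2, hc2n, hc2s, hc2⟩ := ih g hg (by omega)
        refine ⟨fun v => c1 v + c2 v, fun v => add_nonneg (hc1n v) (hc2n v), ?_, ?_⟩
        · intro v hv
          dsimp only at hv
          rcases ne_or_eq (c1 v) 0 with h | h
          · exact hc1s v h
          · apply hc2s v
            intro h2
            exact hv (by rw [h, h2, add_zero])
        · dsimp only
          rw [hbg, hc1, hc2, ← Finset.sum_add_distrib]
          apply Finset.sum_congr rfl
          intro v _
          rw [add_smul]
  intro β hβ
  exact H _ β hβ (Nat.lt_succ_self _)

lemma simple_reflect_pos {Φ : Set V} {x : V} (hΦ : IsRootSystem n Φ)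
    (hx : ∀ α ∈ Φ, ⟪x, α⟫ ≠ 0) {δ β : V} (hδ : δ ∈ Simp Φ x) (hβ : β ∈ Pos Φ x)
    (hne : β ≠ δ) : affRefl δ 0 β ∈ Pos Φ x := by
  classical
  have hγΦ : affRefl δ 0 β ∈ Φ := refl_mem_root hΦ hδ.1.1 hβ.1
  rcases lt_or_gt_of_ne (hx _ hγΦ) with hneg | hpos
  swap
  · exact ⟨hγΦ, hpos⟩
  exfalso
  set γ := affRefl δ 0 β with hγ
  have hmγ : γ = β - (2 * ⟪β, δ⟫ / ⟪δ, δ⟫) • δ := affRefl_apply' δ β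
  set m : ℝ := 2 * ⟪β, δ⟫ / ⟪δ, δ⟫ with hm
  have hnγ : -γ ∈ Pos Φ x := by
    refine ⟨neg_mem_root hΦ hγΦ, ?_⟩
    rw [inner_neg_right]
    linarith
  obtain ⟨c, hcn, hcs, hcsum⟩ := rep_of_pos hΦ hx β hβ
  obtain ⟨c', hcn', hcs', hcsum'⟩ := rep_of_pos hΦ hx (-γ) hnγ
  have hδF : δ ∈ hΦ.finite.toFinset := (Set.Finite.mem_toFinset _).2 hδ.1.1
  have hzero : ∑ v ∈ hΦ.finite.toFinset,
      (c v + c' v - (if v = δ then m else 0)) • v = 0 := by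
    have hsum3 : ∑ v ∈ hΦ.finite.toFinset, (if v = δ then m else 0) • v = m • δ := by
      have hrw : ∀ v ∈ hΦ.finite.toFinset,
          (if v = δ then m else 0) • v = if v = δ then m • v else 0 := by
        intro v _; split <;> simp
      rw [Finset.sum_congr rfl hrw]
      rw [Finset.sum_ite_eq' hΦ.finite.toFinset δ (fun v => m • v), if_pos hδF]
    have : β + -γ - m • δ = 0 := by
      rw [hmγ]; module
    calc ∑ v ∈ hΦ.finite.toFinset, (c v + c' v - (if v = δ then m else 0)) • v
        = (∑ v ∈ hΦ.finite.toFinset, c v • v) + (∑ v ∈ hΦ.finite.toFinset, c' v • v)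
          - ∑ v ∈ hΦ.finite.toFinset, (if v = δ then m else 0) • v := by
          rw [← Finset.sum_add_distrib, ← Finset.sum_sub_distrib]
          apply Finset.sum_congr rfl
          intro v _
          rw [sub_smul, add_smul]
      _ = β + -γ - m • δ := by rw [← hcsum, ← hcsum', hsum3]
      _ = 0 := this
  have hall := zero_coeffs hΦ hx _
    (fun v hv => by
      by_cases h : v = δ
      · rw [h]; exact hδ
      · rcases ne_or_eq (c v) 0 with h1 | h1
        · exact hcs v h1
        · apply hcs' v
          intro h2
          apply hv
          rw [h1, h2, if_neg h]
          norm_num) hzero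
  have hc0 : ∀ v, v ≠ δ → c v = 0 := by
    intro v hvδ
    have := hall v
    rw [if_neg hvδ] at this
    have h1 : c v + c' v = 0 := by linarith
    have := hcn v
    have := hcn' v
    linarith
  have hβδ : β = c δ • δ := by
    rw [hcsum]
    rw [Finset.sum_eq_single δ]
    · intro v _ hvδ
      rw [hc0 v hvδ, zero_smul]
    · intro h
      exact absurd hδF h
  have := hΦ.reduced δ hδ.1.1 (c δ) (by rw [← hβδ]; exact hβ.1)
  rcases this with h1 | h1
  · exact hne (by rw [hβδ, h1, one_smul])
  · have := hcn δ
    rw [h1] at this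
    norm_num at this

def SimpRefl (Φ : Set V) (x : V) : Set (Equiv.Perm V) :=
  {p | ∃ δ ∈ Simp Φ x, p = affRefl δ 0}

lemma refl_mem_simple_closure {Φ : Set V} {x : V} (hΦ : IsRootSystem n Φ)
    (hx : ∀ α ∈ Φ, ⟪x, α⟫ ≠ 0) :
    ∀ α ∈ Pos Φ x, affRefl α 0 ∈ Subgroup.closure (SimpRefl Φ x) := by
  classical
  have H : ∀ k : ℕ, ∀ α ∈ Pos Φ x,
      ((hΦ.finite.toFinset).filter (fun γ => ⟪x, γ⟫ < ⟪x, α⟫)).card < k →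
      affRefl α 0 ∈ Subgroup.closure (SimpRefl Φ x) := by
    intro k
    induction k with
    | zero => intro α hα hk; omega
    | succ k ih =>
      intro α hα hk
      by_cases hs : α ∈ Simp Φ x
      · exact Subgroup.subset_closure ⟨α, hs, rfl⟩
      · -- find δ ∈ Simp with ⟪α, δ⟫ > 0
        obtain ⟨c, hcn, hcs, hcsum⟩ := rep_of_pos hΦ hx α hα
        have hαα : (0:ℝ) < ⟪α, α⟫ := inner_self_pos' (hΦ.nonzero α hα.1)
        have hex : ∃ δ, c δ ≠ 0 ∧ 0 < ⟪α, δ⟫ := by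
          by_contra hcon
          push_neg at hcon
          have : ⟪α, α⟫ ≤ 0 := by
            nth_rewrite 2 [hcsum]
            rw [inner_sum]
            apply Finset.sum_nonpos
            intro v _
            rw [real_inner_smul_right]
            rcases eq_or_ne (c v) 0 with h | h
            · rw [h, zero_mul]
            · exact mul_nonpos_of_nonneg_of_nonpos (hcn v) (hcon v h)
          linarith
        obtain ⟨δ, hcδ, hαδ⟩ := hex
        have hδS : δ ∈ Simp Φ x := hcs δ hcδ
        have hαδne : α ≠ δ := fun h => hs (h ▸ hδS)
        have hα' : affRefl δ 0 α ∈ Pos Φ x := simple_reflect_pos hΦ hx hδS hα hαδne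
        have hm : (0:ℝ) < 2 * ⟪α, δ⟫ / ⟪δ, δ⟫ := by
          have := inner_self_pos' (hΦ.nonzero δ hδS.1.1)
          positivity
        have hxlt : ⟪x, affRefl δ 0 α⟫ < ⟪x, α⟫ := by
          rw [affRefl_apply', inner_sub_right, real_inner_smul_right]
          have := hδS.1.2
          nlinarith
        have hcard := measure_lt hΦ hα'.1 hα.1 hxlt
        have hIH := ih _ hα' (by omega)
        -- r_α = r_δ * r_{α'} * r_δ
        have hgood : Good Φ (affRefl δ 0) :=
          good_affRefl hδS.1.1 (hΦ.reflect_mem δ hδS.1.1)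
        have hconj := conj_affRefl hgood α
        -- affRefl δ 0 * affRefl α 0 * (affRefl δ 0)⁻¹ = affRefl (affRefl δ 0 α) 0
        have heq : affRefl δ 0 * affRefl (affRefl δ 0 α) 0 * affRefl δ 0 = affRefl α 0 := by
          rw [← hconj, affRefl_inv]
          rw [show affRefl δ 0 * (affRefl δ 0 * affRefl α 0 * affRefl δ 0) * affRefl δ 0
              = (affRefl δ 0 * affRefl δ 0) * affRefl α 0 * (affRefl δ 0 * affRefl δ 0) by group]
          rw [affRefl_mul_self]
          group
        rw [← heq]
        exact Subgroup.mul_mem _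
          (Subgroup.mul_mem _ (Subgroup.subset_closure ⟨δ, hδS, rfl⟩) hIH)
          (Subgroup.subset_closure ⟨δ, hδS, rfl⟩)
  intro α hα
  exact H _ α hα (Nat.lt_succ_self _)

lemma linW_le_simple_closure {Φ : Set V} {x : V} (hΦ : IsRootSystem n Φ)
    (hx : ∀ α ∈ Φ, ⟪x, α⟫ ≠ 0) :
    linW Φ ≤ Subgroup.closure (SimpRefl Φ x) := by
  rw [linW, Subgroup.closure_le]
  rintro p ⟨α, hα, rfl⟩
  rcases lt_or_gt_of_ne (hx α hα) with hneg | hpos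
  · have hnα : -α ∈ Pos Φ x := by
      refine ⟨neg_mem_root hΦ hα, ?_⟩
      rw [inner_neg_right]; linarith
    have := refl_mem_simple_closure hΦ hx (-α) hnα
    rwa [affRefl_neg] at this
  · exact refl_mem_simple_closure hΦ hx α ⟨hα, hpos⟩

/-- The strong exchange property along a word in simple reflections. -/
lemma exchange {Φ : Set V} {x : V} (hΦ : IsRootSystem n Φ)
    (hx : ∀ α ∈ Φ, ⟪x, α⟫ ≠ 0) :
    ∀ l : List (Equiv.Perm V), (∀ r ∈ l, r ∈ SimpRefl Φ x) →
    ∀ γ ∈ Φ, 0 < ⟪x, γ⟫ → ⟪x, l.prod γ⟫ < 0 →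
    ∃ l' : List (Equiv.Perm V), (∀ r ∈ l', r ∈ SimpRefl Φ x) ∧
      l'.length + 1 = l.length ∧ l'.prod = l.prod * affRefl γ 0 := by
  intro l
  induction l with
  | nil =>
      intro _ γ hγ hγpos hneg
      rw [List.prod_nil] at hneg
      simp only [Equiv.Perm.one_apply] at hneg
      linarith
  | cons s t ih =>
      intro hl γ hγ hγpos hneg
      have hsS : s ∈ SimpRefl Φ x := hl s (by simp)
      have htS : ∀ r ∈ t, r ∈ SimpRefl Φ x := fun r hr => hl r (by simp [hr])
      obtain ⟨δ, hδS, rfl⟩ := hsS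
      have htlinR : ∀ r ∈ t, r ∈ linR Φ := by
        intro r hr
        obtain ⟨ε, hεS, rfl⟩ := htS r hr
        exact ⟨ε, hεS.1.1, rfl⟩
      have htgood : Good Φ t.prod :=
        good_of_mem_linW hΦ.finite hΦ.reflect_mem (list_prod_mem_linW htlinR)
      have hγ' : t.prod γ ∈ Φ := htgood.maps γ hγ
      rw [List.prod_cons] at hneg
      have hsplit : (affRefl δ 0 * t.prod) γ = affRefl δ 0 (t.prod γ) := rfl
      rcases lt_or_gt_of_ne (hx _ hγ') with hneg' | hpos'
      · obtain ⟨t', ht'S, ht'len, ht'prod⟩ := ih htS γ hγ hγpos hneg'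
        refine ⟨affRefl δ 0 :: t', ?_, ?_, ?_⟩
        · intro r hr
          rcases List.mem_cons.1 hr with h | h
          · rw [h]; exact ⟨δ, hδS, rfl⟩
          · exact ht'S r h
        · simp only [List.length_cons, ht'len, List.length_cons]
        · rw [List.prod_cons, ht'prod, List.prod_cons, mul_assoc]
      · -- t.prod γ ∈ Pos and reflecting it is negative, so t.prod γ = δ
        have hPos : t.prod γ ∈ Pos Φ x := ⟨hγ', hpos'⟩
        have hEq : t.prod γ = δ := by
          by_contra hneq
          have := simple_reflect_pos hΦ hx hδS hPos hneq
          rw [hsplit] at hneg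
          linarith [this.2]
        refine ⟨t, htS, by simp, ?_⟩
        have hconj := conj_affRefl htgood γ
        rw [hEq] at hconj
        -- t.prod * affRefl γ 0 * (t.prod)⁻¹ = affRefl δ 0
        rw [List.prod_cons, ← hconj]
        calc t.prod = t.prod * (affRefl γ 0 * affRefl γ 0) := by
              rw [affRefl_mul_self, mul_one]
          _ = t.prod * affRefl γ 0 * t.prod⁻¹ * t.prod * affRefl γ 0 := by group

/-- The stabilizer of a regular point is trivial. -/
lemma regular_stabilizer_trivial {Φ : Set V} {x : V} (hΦ : IsRootSystem n Φ)
    (hx : ∀ α ∈ Φ, ⟪x, α⟫ ≠ 0) {w : Equiv.Perm V} (hw : w ∈ linW Φ)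
    (hfix : w x = x) : w = 1 := by
  classical
  have hwgood : Good Φ w := good_of_mem_linW hΦ.finite hΦ.reflect_mem hw
  have hwS : w ∈ Subgroup.closure (SimpRefl Φ x) := linW_le_simple_closure hΦ hx hw
  have hSinv : ∀ s ∈ SimpRefl Φ x, s⁻¹ ∈ SimpRefl Φ x := by
    rintro s ⟨δ, hδ, rfl⟩
    rw [affRefl_inv]
    exact ⟨δ, hδ, rfl⟩
  obtain ⟨l0, hl0S, hl0prod⟩ := exists_word hSinv hwS
  by_contra hne
  set P : ℕ → Prop := fun k => ∃ l : List (Equiv.Perm V),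
    (∀ r ∈ l, r ∈ SimpRefl Φ x) ∧ l.prod = w ∧ l.length = k with hP
  have hex : ∃ k, P k := ⟨l0.length, l0, hl0S, hl0prod, rfl⟩
  obtain ⟨l, hlS, hlprod, hllen⟩ := Nat.find_spec hex
  rcases List.eq_nil_or_concat l with rfl | ⟨t, s, rfl⟩
  · exact hne (by rw [← hlprod, List.prod_nil])
  obtain ⟨δ, hδS, rfl⟩ : s ∈ SimpRefl Φ x := hlS s (by simp)
  have hδΦ : δ ∈ Φ := hδS.1.1
  have htS : ∀ r ∈ t, r ∈ SimpRefl Φ x := fun r hr => hlS r (by simp [hr])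
  have hprodconcat : (t ++ [affRefl δ 0]).prod = t.prod * affRefl δ 0 := by
    rw [List.prod_append, List.prod_singleton]
  have hw_eq : w = t.prod * affRefl δ 0 := by rw [← hlprod, List.concat_eq_append, hprodconcat]
  have hwδpos : 0 < ⟪x, w δ⟫ := by
    have h1 : ⟪x, w δ⟫ = ⟪w x, w δ⟫ := by rw [hfix]
    rw [h1, hwgood.isom]
    exact hδS.1.2
  have huδ : t.prod δ = -(w δ) := by
    have h1 : t.prod δ = (w * affRefl δ 0) δ := by
      rw [hw_eq, mul_assoc, affRefl_mul_self, mul_one]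
    rw [h1]
    show w (affRefl δ 0 δ) = -(w δ)
    rw [affRefl_self (hΦ.nonzero δ hδΦ), hwgood.map_neg]
  have hneg : ⟪x, t.prod δ⟫ < 0 := by
    rw [huδ, inner_neg_right]
    linarith
  obtain ⟨t', ht'S, ht'len, ht'prod⟩ :=
    exchange hΦ hx t htS δ hδΦ hδS.1.2 hneg
  have ht'w : t'.prod = w := by rw [ht'prod, ← hw_eq]
  have hlt : t'.length < Nat.find hex := by
    have h1 : (t ++ [affRefl δ 0]).length = Nat.find hex := by
      rw [← hllen, List.concat_eq_append]
    rw [List.length_append, List.length_singleton] at h1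
    omega
  exact Nat.find_min hex hlt ⟨t', ht'S, ht'w, rfl⟩

/-- avoidance of finitely many hyperplanes within a subspace -/
lemma avoidance (F : Submodule ℝ V) (S : Finset V)
    (hS : ∀ α ∈ S, ∃ y ∈ F, ⟪y, α⟫ ≠ 0) :
    ∃ z ∈ F, ∀ α ∈ S, ⟪z, α⟫ ≠ 0 := by
  classical
  induction S using Finset.induction_on with
  | empty => exact ⟨0, F.zero_mem, by simp⟩
  | insert α S0 hnotmem ih =>
      obtain ⟨z, hzF, hz⟩ := ih (fun β hβ => hS β (Finset.mem_insert_of_mem hβ))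
      obtain ⟨y, hyF, hy⟩ := hS α (Finset.mem_insert_self α S0)
      obtain ⟨tval, htval⟩ := Infinite.exists_notMem_finset
        ((insert α S0).image (fun γ => -⟪z, γ⟫ / ⟪y, γ⟫))
      refine ⟨z + tval • y, F.add_mem hzF (F.smul_mem _ hyF), ?_⟩
      intro γ hγ
      rw [inner_add_left, real_inner_smul_left]
      by_cases hyγ : ⟪y, γ⟫ = 0
      · rw [hyγ, mul_zero, add_zero]
        rcases Finset.mem_insert.1 hγ with rfl | h
        · exact absurd hyγ hy
        · exact hz γ h
      · intro hcon
        apply htval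
        rw [Finset.mem_image]
        refine ⟨γ, hγ, ?_⟩
        show -⟪z, γ⟫ / ⟪y, γ⟫ = tval
        rw [div_eq_iff hyγ]
        linarith

/-- If `w ≠ 1` there is a root orthogonal to the fixed space of `w`. -/
lemma exists_orth_root {Φ : Set V} (hΦ : IsRootSystem n Φ)
    {w : Equiv.Perm V} (hw : w ∈ linW Φ) (hne : w ≠ 1) :
    ∃ β ∈ Φ, ∀ u : V, w u = u → ⟪u, β⟫ = 0 := by
  by_contra hcon
  push_neg at hcon
  have hg : Good Φ w := good_of_mem_linW hΦ.finite hΦ.reflect_mem hw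
  have havoid : ∀ α ∈ hΦ.finite.toFinset, ∃ y ∈ FixSub hg, ⟪y, α⟫ ≠ 0 := by
    intro α hα
    rw [Set.Finite.mem_toFinset] at hα
    obtain ⟨u, hu, huα⟩ := hcon α hα
    exact ⟨u, hu, huα⟩
  obtain ⟨z, hzF, hz⟩ := avoidance (FixSub hg) hΦ.finite.toFinset havoid
  have hreg : ∀ α ∈ Φ, ⟪z, α⟫ ≠ 0 := by
    intro α hα
    exact hz α ((Set.Finite.mem_toFinset _).2 hα)
  exact hne (regular_stabilizer_trivial hΦ hreg hw hzF)

lemma lower_bound_aux {Φ : Set V} (hΦ : IsRootSystem n Φ) :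
    ∀ l : List (Equiv.Perm V), (∀ r ∈ l, r ∈ linR Φ) →
    ∃ U : Submodule ℝ V, (∀ u ∈ U, l.prod u = u) ∧
      n ≤ Module.finrank ℝ U + l.length := by
  intro l
  induction l with
  | nil =>
      intro _
      refine ⟨⊤, fun u _ => by simp, ?_⟩
      rw [finrank_top, finrank_euclideanSpace_fin]
      simp
  | cons r t ih =>
      intro hl
      obtain ⟨Ut, hUtfix, hUtrank⟩ := ih (fun s hs => hl s (by simp [hs]))
      obtain ⟨α, hα, rfl⟩ : r ∈ linR Φ := hl r (by simp)
      have hα0 : α ≠ 0 := hΦ.nonzero α hα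
      refine ⟨Ut ⊓ (Submodule.span ℝ {α})ᗮ, ?_, ?_⟩
      · intro u hu
        have hu1 : u ∈ Ut := hu.1
        have hu2 : ⟪u, α⟫ = 0 := by
          have := hu.2 α (Submodule.mem_span_singleton_self α)
          rw [real_inner_comm] at this
          exact this
        rw [List.prod_cons]
        show affRefl α 0 (t.prod u) = u
        rw [hUtfix u hu1, affRefl_fix hu2]
      · have hrank1 : Module.finrank ℝ (Submodule.span ℝ {α}) = 1 :=
          finrank_span_singleton hα0
        have hrank2 : Module.finrank ℝ (Submodule.span ℝ {α}) +
            Module.finrank ℝ ((Submodule.span ℝ {α})ᗮ) = n := by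
          rw [Submodule.finrank_add_finrank_orthogonal, finrank_euclideanSpace_fin]
        have hrank3 := Submodule.finrank_sup_add_finrank_inf_eq Ut ((Submodule.span ℝ {α})ᗮ)
        have hrank4 : Module.finrank ℝ (Ut ⊔ (Submodule.span ℝ {α})ᗮ : Submodule ℝ V) ≤ n := by
          have := Submodule.finrank_le (Ut ⊔ (Submodule.span ℝ {α})ᗮ : Submodule ℝ V)
          rwa [finrank_euclideanSpace_fin] at this
      -- n ≤ finrank (Ut ⊓ Hᗮ) + (t.length + 1)
        rw [List.length_cons]
        omega

/-- key constructive step: from a root orthogonal to the fixed space,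
the fixed space grows after multiplying by its reflection. -/
lemma grow_fix {Φ : Set V} (hΦ : IsRootSystem n Φ) {w : Equiv.Perm V}
    (hg : Good Φ w) {β : V} (hβΦ : β ∈ Φ)
    (horth : ∀ u : V, w u = u → ⟪u, β⟫ = 0) (hwne : w ≠ 1) :
    ∃ y : V, w y ≠ y ∧ affRefl β 0 (w y) = y := by
  classical
  have hβ0 : β ≠ 0 := hΦ.nonzero β hβΦ
  have hββ : (0:ℝ) < ⟪β, β⟫ := inner_self_pos' hβ0
  -- linear map T = w - id
  set T : (V) →ₗ[ℝ] (V) :=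
    { toFun := fun v => w v - v
      map_add' := by
        intro a b
        rw [hg.map_add]
        abel
      map_smul' := by
        intro c a
        rw [hg.map_smul]
        simp [smul_sub] } with hT
  have hker : LinearMap.ker T = FixSub hg := by
    ext v
    simp only [LinearMap.mem_ker, hT, LinearMap.coe_mk, AddHom.coe_mk, sub_eq_zero]
    rfl
  have hrange : LinearMap.range T = (FixSub hg)ᗮ := by
    apply Submodule.eq_of_le_of_finrank_le
    · rintro _ ⟨v, rfl⟩
      rw [Submodule.mem_orthogonal]
      intro u hu
      show ⟪u, w v - v⟫ = 0
      rw [inner_sub_right]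
      have h1 : ⟪u, w v⟫ = ⟪w u, w v⟫ := by
        rw [show w u = u from hu]
      rw [h1, hg.isom]
      ring
    · have h1 := LinearMap.finrank_range_add_finrank_ker T
      have h2 := Submodule.finrank_add_finrank_orthogonal (FixSub hg)
      rw [hker] at h1
      rw [finrank_euclideanSpace_fin] at h2
      have h3 : Module.finrank ℝ (EuclideanSpace ℝ (Fin n)) = n := finrank_euclideanSpace_fin
      omega
  have hβmem : β ∈ LinearMap.range T := by
    rw [hrange, Submodule.mem_orthogonal]
    intro u hu
    exact horth u hu
  obtain ⟨y, hy⟩ := hβmem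
  have hwy : w y = y + β := by
    have : w y - y = β := hy
    rw [← this]; abel
  have hyne : w y ≠ y := by
    rw [hwy]
    intro h
    apply hβ0
    have := add_left_cancel (show y + β = y + 0 by rw [add_zero]; exact h)
    exact this
  refine ⟨y, hyne, ?_⟩
  -- compute the inner products
  have hisom : ⟪w y, w y⟫ = ⟪y, y⟫ := hg.isom y y
  have hwyβ : ⟪w y, β⟫ = ⟪β, β⟫ / 2 := by
    have hβeq : β = w y - y := hy.symm
    rw [hβeq]
    simp only [inner_sub_left, inner_sub_right]
    rw [hisom, real_inner_comm (w y) y]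
    ring
  rw [affRefl_apply', hwyβ]
  have hcoef : 2 * (⟪β, β⟫ / 2) / ⟪β, β⟫ = 1 := by
    rw [show (2:ℝ) * (⟪β, β⟫ / 2) = ⟪β, β⟫ by ring, div_self hββ.ne']
  rw [hcoef, one_smul, hwy]
  abel

lemma upper_bound_aux {Φ : Set V} (hΦ : IsRootSystem n Φ) :
    ∀ k : ℕ, ∀ w : Equiv.Perm V, w ∈ linW Φ → ∀ hg : Good Φ w,
    n ≤ Module.finrank ℝ (FixSub hg) + k →
    ∃ l : List (Equiv.Perm V), (∀ r ∈ l, r ∈ linR Φ) ∧ l.prod = w ∧ l.length ≤ k := by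
  intro k
  induction k with
  | zero =>
      intro w hw hg hrank
      have hle : Module.finrank ℝ (FixSub hg) ≤ n := by
        have := Submodule.finrank_le (FixSub hg)
        rwa [finrank_euclideanSpace_fin] at this
      have htop : FixSub hg = ⊤ := by
        apply Submodule.eq_top_of_finrank_eq
        rw [finrank_euclideanSpace_fin]
        omega
      have hw1 : w = 1 := by
        apply Equiv.ext
        intro v
        have : v ∈ FixSub hg := htop ▸ Submodule.mem_top
        exact this
      exact ⟨[], by simp, by simp [hw1], by simp⟩
  | succ k ih =>
      intro w hw hg hrank
      by_cases hfr : n ≤ Module.finrank ℝ (FixSub hg)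
      · obtain ⟨l, h1, h2, h3⟩ := ih w hw hg (by omega)
        exact ⟨l, h1, h2, by omega⟩
      · push_neg at hfr
        have hwne : w ≠ 1 := by
          intro h
          subst h
          have : FixSub hg = ⊤ := by
            ext v
            simp only [Submodule.mem_top, iff_true]
            rfl
          rw [this, finrank_top, finrank_euclideanSpace_fin] at hfr
          omega
        obtain ⟨β, hβΦ, horth⟩ := exists_orth_root hΦ hw hwne
        obtain ⟨y, hyne, hyfix⟩ := grow_fix hΦ hg hβΦ horth hwne
        set w' : Equiv.Perm V := affRefl β 0 * w with hw'
        have hw'mem : w' ∈ linW Φ :=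
          Subgroup.mul_mem _ (Subgroup.subset_closure ⟨β, hβΦ, rfl⟩) hw
        have hg' : Good Φ w' := good_of_mem_linW hΦ.finite hΦ.reflect_mem hw'mem
        have hsub : FixSub hg < FixSub hg' := by
          constructor
          · intro u hu
            have hufix : w u = u := hu
            show w' u = u
            rw [hw']
            show affRefl β 0 (w u) = u
            rw [hufix, affRefl_fix (horth u hufix)]
          · intro hcon
            have hymem : y ∈ FixSub hg' := by
              show w' y = y
              exact hyfix
            have : y ∈ FixSub hg := hcon hymem
            exact hyne this
        have hrank' : Module.finrank ℝ (FixSub hg) < Module.finrank ℝ (FixSub hg') :=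
          Submodule.finrank_lt_finrank_of_lt hsub
        obtain ⟨l', h1, h2, h3⟩ := ih w' hw'mem hg' (by omega)
        refine ⟨affRefl β 0 :: l', ?_, ?_, ?_⟩
        · intro r hr
          rcases List.mem_cons.1 hr with h | h
          · rw [h]; exact ⟨β, hβΦ, rfl⟩
          · exact h1 r h
        · rw [List.prod_cons, h2, hw', ← mul_assoc, affRefl_mul_self, one_mul]
        · simp only [List.length_cons]
          omega

theorem main_result (hn : 1 ≤ n) {Φ : Set V} (hΦ : IsRootSystem n Φ)
    (w : Equiv.Perm V) (hw : w ∈ linW Φ) :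
    wordLength (linR Φ) w =
      ((n - Module.finrank ℝ
          ↥(Submodule.span ℝ {x : V | w x = x}) : ℕ) : ℕ∞) := by
  classical
  have hg : Good Φ w := good_of_mem_linW hΦ.finite hΦ.reflect_mem hw
  have hspan : Submodule.span ℝ {x : V | w x = x} = FixSub hg := span_fix_eq hg
  rw [hspan]
  set q : ℕ := n - Module.finrank ℝ (FixSub hg) with hq
  have hfr_le : Module.finrank ℝ (FixSub hg) ≤ n := by
    have := Submodule.finrank_le (FixSub hg)
    rwa [finrank_euclideanSpace_fin] at this
  apply le_antisymm
  · -- upper bound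
    obtain ⟨l, hl1, hl2, hl3⟩ := upper_bound_aux hΦ q w hw hg (by omega)
    calc wordLength (linR Φ) w ≤ (l.length : ℕ∞) := by
          apply sInf_le
          exact ⟨l, hl1, hl2, rfl⟩
      _ ≤ (q : ℕ∞) := by
          exact_mod_cast hl3
  · -- lower bound
    apply le_sInf
    rintro m ⟨l, hl1, hl2, rfl⟩
    obtain ⟨U, hUfix, hUrank⟩ := lower_bound_aux hΦ l hl1
    have hUle : U ≤ FixSub hg := by
      intro u hu
      show w u = u
      rw [← hl2]
      exact hUfix u hu
    have hUm := Submodule.finrank_mono hUle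
    have : q ≤ l.length := by omega
    exact_mod_cast this

end CarterProof

theorem spherical_reflection_length_eq_codim_fixed (n : ℕ) (hn : 1 ≤ n) (Φ : Set (EuclideanSpace ℝ (Fin n))) (hΦ : IsRootSystem n Φ)
    (w : Equiv.Perm (EuclideanSpace ℝ (Fin n))) (hw : w ∈ linW Φ) :
    wordLength (linR Φ) w =
      ((n - Module.finrank ℝ
          ↥(Submodule.span ℝ {x : EuclideanSpace ℝ (Fin n) | w x = x}) : ℕ) : ℕ∞) :=
  CarterProof.main_result hn hΦ w hw

end
end

section
/- Let W be the affine Coxeter group generated by the affine reflections associated to a crystallographic root system Φ spanning ℝ^n. If w ∈ W has a factorization w = r_{α₁,c₁} r_{α₂,c₂} ⋯ r_{α_m,c_m} with α₁, …, α_m ∈ Φ linearly independent and c₁, …, c_m ∈ ℤ, then ℓ_R(w) = m. -/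
open RealInnerProductSpace

noncomputable section

namespace AffLen

variable {n : ℕ}

lemma affRefl_apply (β : EuclideanSpace ℝ (Fin n)) (i : ℤ) (x : EuclideanSpace ℝ (Fin n)) :
    affRefl β i x = x - (⟪x, β⟫ - (i : ℝ)) • coroot β := rfl

lemma coroot_mem_span (β : EuclideanSpace ℝ (Fin n)) :
    coroot β ∈ Submodule.span ℝ {β} :=
  Submodule.smul_mem _ _ (Submodule.mem_span_singleton_self β)

lemma coroot_ne_zero {β : EuclideanSpace ℝ (Fin n)} (hβ : β ≠ 0) : coroot β ≠ 0 :=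
  smul_ne_zero (div_ne_zero two_ne_zero (inner_self_ne_zero.mpr hβ)) hβ

/-- The linear reflection `x ↦ x - ⟪x,β⟫ • β∨` as a linear endomorphism. -/
def linRefl (β : EuclideanSpace ℝ (Fin n)) : Module.End ℝ (EuclideanSpace ℝ (Fin n)) :=
  LinearMap.id - (((innerSL ℝ) β).smulRight (coroot β)).toLinearMap

lemma linRefl_apply (β x : EuclideanSpace ℝ (Fin n)) :
    linRefl β x = x - ⟪x, β⟫ • coroot β := by
  simp only [linRefl, LinearMap.sub_apply, LinearMap.id_apply, ContinuousLinearMap.coe_coe,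
    ContinuousLinearMap.smulRight_apply, innerSL_apply_apply, real_inner_comm]

lemma affRefl_eq_linRefl (β : EuclideanSpace ℝ (Fin n)) (i : ℤ) (x : EuclideanSpace ℝ (Fin n)) :
    affRefl β i x = linRefl β x + (i : ℝ) • coroot β := by
  rw [affRefl_apply, linRefl_apply]; module


/-- The permutation given by a word of affine reflections, encoded by root/integer pairs. -/
def Pl (l : List (EuclideanSpace ℝ (Fin n) × ℤ)) : Equiv.Perm (EuclideanSpace ℝ (Fin n)) :=
  (l.map fun p => affRefl p.1 p.2).prod

/-- The linear part: the corresponding word of linear reflections. -/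
def Ll (l : List (EuclideanSpace ℝ (Fin n) × ℤ)) : Module.End ℝ (EuclideanSpace ℝ (Fin n)) :=
  (l.map fun p => linRefl p.1).prod

lemma Pl_cons (p : EuclideanSpace ℝ (Fin n) × ℤ) (l : List _) (x : EuclideanSpace ℝ (Fin n)) :
    Pl (p :: l) x = affRefl p.1 p.2 (Pl l x) := by
  simp [Pl, Equiv.Perm.mul_apply]

lemma Ll_cons (p : EuclideanSpace ℝ (Fin n) × ℤ) (l : List _) (x : EuclideanSpace ℝ (Fin n)) :
    Ll (p :: l) x = linRefl p.1 (Ll l x) := by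
  simp [Ll, Module.End.mul_apply]

lemma Pl_affine (l : List (EuclideanSpace ℝ (Fin n) × ℤ)) (x : EuclideanSpace ℝ (Fin n)) :
    Pl l x = Ll l x + Pl l 0 := by
  induction l with
  | nil => simp [Pl, Ll]
  | cons p l ih =>
    rw [Pl_cons, Pl_cons, ih, affRefl_eq_linRefl, affRefl_eq_linRefl, Ll_cons, map_add]
    have h0 : Ll l (0 : EuclideanSpace ℝ (Fin n)) = 0 := map_zero _
    abel

lemma Ll_moved (l : List (EuclideanSpace ℝ (Fin n) × ℤ)) (x : EuclideanSpace ℝ (Fin n)) :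
    Ll l x - x ∈ Submodule.span ℝ {v | ∃ p ∈ l, p.1 = v} := by
  induction l with
  | nil => simp [Ll]
  | cons p l ih =>
    have hsub : {v | ∃ q ∈ l, Prod.fst q = v} ⊆ {v | ∃ q ∈ p :: l, Prod.fst q = v} := by
      rintro v ⟨q, hq, rfl⟩; exact ⟨q, List.mem_cons_of_mem _ hq, rfl⟩
    have h1 : Ll l x - x ∈ Submodule.span ℝ {v | ∃ q ∈ p :: l, Prod.fst q = v} :=
      Submodule.span_mono hsub (ih)
    have h2 : linRefl p.1 (Ll l x) - Ll l x ∈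
        Submodule.span ℝ {v | ∃ q ∈ p :: l, Prod.fst q = v} := by
      rw [linRefl_apply]
      have : x ∈ ({v | ∃ q ∈ p :: l, Prod.fst q = v} : Set _) → True := fun _ => trivial
      have hmem : p.1 ∈ ({v | ∃ q ∈ p :: l, Prod.fst q = v} : Set _) :=
        ⟨p, List.mem_cons_self, rfl⟩
      have : (⟪Ll l x, p.1⟫ : ℝ) • coroot p.1 ∈
          Submodule.span ℝ {v | ∃ q ∈ p :: l, Prod.fst q = v} := by
        refine Submodule.smul_mem _ _ ?_
        exact Submodule.span_mono (Set.singleton_subset_iff.mpr hmem) (coroot_mem_span p.1)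
      simpa using Submodule.neg_mem _ this
    have := Submodule.add_mem _ h2 h1
    rw [Ll_cons]
    simpa using this


lemma linRefl_involutive (β : EuclideanSpace ℝ (Fin n)) :
    Function.Involutive (fun x => linRefl β x) := by
  have h := affRefl_involutive β 0
  intro x
  have e : ∀ y, linRefl β y = y - (⟪y, β⟫ - ((0 : ℤ) : ℝ)) • coroot β := by
    intro y; rw [linRefl_apply]; push_cast; rw [sub_zero]
  simp only [e]
  exact h x

/-- Carter's lemma: if the roots of a word of linear reflections are linearly
independent, then any fixed vector is orthogonal to all the roots. -/
lemma carter {Φ : Set (EuclideanSpace ℝ (Fin n))} (hnz : ∀ β ∈ Φ, β ≠ (0 : EuclideanSpace ℝ (Fin n))) :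
    ∀ l : List (EuclideanSpace ℝ (Fin n) × ℤ), (∀ p ∈ l, p.1 ∈ Φ) →
    LinearIndependent ℝ (fun i : Fin l.length => (l.get i).1) →
    ∀ x : EuclideanSpace ℝ (Fin n), Ll l x = x → ∀ p ∈ l, ⟪x, p.1⟫ = 0 := by
  intro l
  induction l with
  | nil => intro _ _ x _ p hp; simp at hp
  | cons q t ih =>
    intro hmem hind x hx p hp
    have hq : q.1 ∈ Φ := hmem q (List.mem_cons_self)
    have hβ0 : q.1 ≠ 0 := hnz _ hq
    -- the family indexed over the cons list
    set f : Fin (q :: t).length → EuclideanSpace ℝ (Fin n) :=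
      fun i => ((q :: t).get i).1 with hf
    set z : Fin (q :: t).length := ⟨0, by simp⟩ with hz0
    set g : Fin t.length → Fin (q :: t).length := fun i => ⟨i + 1, by simp⟩ with hg
    have hginj : Function.Injective g := by
      intro a b hab
      exact Fin.ext (Nat.succ_injective (congrArg Fin.val hab))
    have hx' : linRefl q.1 (Ll t x) = x := by rw [← Ll_cons]; exact hx
    have h1 : Ll t x = linRefl q.1 x := by
      calc Ll t x = linRefl q.1 (linRefl q.1 (Ll t x)) := (linRefl_involutive q.1 (Ll t x)).symm
        _ = linRefl q.1 x := by rw [hx']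
    have h2 : Ll t x - x = -⟪x, q.1⟫ • coroot q.1 := by
      rw [h1, linRefl_apply]; module
    have hsp1 : Ll t x - x ∈ Submodule.span ℝ {q.1} := by
      rw [h2]; exact Submodule.smul_mem _ _ (coroot_mem_span q.1)
    have hsp2 := Ll_moved t x
    have hdisj := hind.disjoint_span_image (s := {z}) (t := {z}ᶜ) disjoint_compl_right
    have himg : f '' {z} = {q.1} := by
      rw [Set.image_singleton]; rfl
    have hzero : Ll t x - x = 0 := by
      refine Submodule.disjoint_def.mp hdisj _ ?_ ?_
      · rw [himg]; exact hsp1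
      · refine Submodule.span_mono ?_ hsp2
        rintro v ⟨p', hp', rfl⟩
        obtain ⟨i, hi⟩ := List.get_of_mem hp'
        refine ⟨g i, ?_, ?_⟩
        · rw [Set.mem_compl_singleton_iff]
          intro hcon
          exact Nat.succ_ne_zero _ (congrArg Fin.val hcon)
        · show ((q :: t).get (g i)).1 = p'.1
          rw [show (q :: t).get (g i) = t.get i from rfl, hi]
    have hq0 : ⟪x, q.1⟫ = 0 := by
      rw [h2] at hzero
      rcases smul_eq_zero.mp hzero with h | h
      · linarith [neg_eq_zero.mp h]
      · exact absurd h (coroot_ne_zero hβ0)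
    have hfix : Ll t x = x := sub_eq_zero.mp hzero
    rcases List.mem_cons.mp hp with hpq | hp'
    · rw [hpq]; exact hq0
    · have hti : LinearIndependent ℝ (fun i : Fin t.length => (t.get i).1) :=
        hind.comp g hginj
      exact ih (fun p hp => hmem p (List.mem_cons_of_mem _ hp)) hti x hfix p hp'


lemma prod_moved (Φ : Set (EuclideanSpace ℝ (Fin n))) (hnz : ∀ β ∈ Φ, β ≠ 0)
    (l : List (Equiv.Perm (EuclideanSpace ℝ (Fin n)))) (hl : ∀ r ∈ l, r ∈ affR Φ) :
    ∃ V : Submodule ℝ (EuclideanSpace ℝ (Fin n)),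
      Module.finrank ℝ V ≤ l.length ∧ ∀ x, l.prod x - x ∈ V := by
  induction l with
  | nil => exact ⟨⊥, by simp, by simp⟩
  | cons r t ih =>
    obtain ⟨V', hV1, hV2⟩ := ih (fun r hr => hl r (List.mem_cons_of_mem _ hr))
    obtain ⟨β, hβΦ, i, rfl⟩ := hl _ (List.mem_cons_self)
    refine ⟨Submodule.span ℝ {β} ⊔ V', ?_, ?_⟩
    · have h1 : Module.finrank ℝ (Submodule.span ℝ {β}) = 1 :=
        finrank_span_singleton (hnz β hβΦ)
      have h2 := Submodule.finrank_sup_add_finrank_inf_eq (Submodule.span ℝ {β}) V'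
      have h3 : Module.finrank ℝ ↥(Submodule.span ℝ {β} ⊔ V') ≤
          Module.finrank ℝ (Submodule.span ℝ {β}) + Module.finrank ℝ V' := by omega
      rw [h1] at h3
      simp only [List.length_cons]
      omega
    · intro x
      have hy := hV2 x
      set y := t.prod x with hy'
      have hprod : (affRefl β i :: t).prod x = affRefl β i y := by
        rw [List.prod_cons, Equiv.Perm.mul_apply]
      have hr : affRefl β i y - y ∈ Submodule.span ℝ {β} := by
        rw [affRefl_apply]
        have : y - (⟪y, β⟫ - (i : ℝ)) • coroot β - y = (-(⟪y, β⟫ - (i : ℝ))) • coroot β := by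
          module
        rw [this]
        exact Submodule.smul_mem _ _ (coroot_mem_span β)
      have : (affRefl β i :: t).prod x - x = (affRefl β i y - y) + (y - x) := by
        rw [hprod]; abel
      rw [this]
      exact Submodule.add_mem _ (Submodule.mem_sup_left hr) (Submodule.mem_sup_right hy)

lemma key (Φ : Set (EuclideanSpace ℝ (Fin n))) (hnz : ∀ β ∈ Φ, β ≠ 0)
    (m : ℕ) (α : Fin m → EuclideanSpace ℝ (Fin n)) (hα : ∀ i, α i ∈ Φ)
    (hind : LinearIndependent ℝ α) (c : Fin m → ℤ)
    (l : List (Equiv.Perm (EuclideanSpace ℝ (Fin n)))) (hl : ∀ r ∈ l, r ∈ affR Φ)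
    (hprod : l.prod = (List.ofFn fun i => affRefl (α i) (c i)).prod) :
    m ≤ l.length := by
  set pl : List (EuclideanSpace ℝ (Fin n) × ℤ) := List.ofFn (fun i => (α i, c i)) with hpl
  have hPl : Pl pl = l.prod := by
    rw [hprod]; unfold Pl; rw [hpl, List.map_ofFn]; rfl
  set A := Ll pl with hA
  set T : Module.End ℝ (EuclideanSpace ℝ (Fin n)) := A - 1 with hT
  set K := Submodule.span ℝ (Set.range α) with hK
  have hplmem : ∀ p ∈ pl, p.1 ∈ Φ := by
    intro p hp
    rw [hpl, List.mem_ofFn] at hp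
    obtain ⟨i, rfl⟩ := hp
    exact hα i
  have hlen : pl.length = m := by simp [hpl]
  have hplind : LinearIndependent ℝ (fun i : Fin pl.length => (pl.get i).1) := by
    have he : (fun i : Fin pl.length => (pl.get i).1) = α ∘ (Fin.cast hlen) := by
      funext i
      have h2 := congrArg Prod.fst (List.get_ofFn (fun j => (α j, c j)) i)
      rw [show (pl.get i).1 = ((List.ofFn fun j => (α j, c j)).get i).1 from rfl, h2]
      rfl
    rw [he]
    exact hind.comp _ (Fin.cast_injective hlen)
  have hker : LinearMap.ker T ≤ Kᗮ := by
    intro x hx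
    have hAx : A x = x := by
      have h0 := LinearMap.mem_ker.mp hx
      have h' : A x - x = 0 := by
        simpa [hT, LinearMap.sub_apply] using h0
      exact sub_eq_zero.mp h'
    have horth : ∀ i, ⟪x, α i⟫ = 0 := by
      intro i
      refine carter hnz pl hplmem hplind x hAx (α i, c i) ?_
      rw [hpl, List.mem_ofFn]
      exact ⟨i, rfl⟩
    rw [Submodule.mem_orthogonal]
    intro u hu
    have hKle : K ≤ (Submodule.span ℝ {x})ᗮ := by
      rw [hK, Submodule.span_le]
      rintro v ⟨i, rfl⟩
      rw [SetLike.mem_coe, Submodule.mem_orthogonal]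
      intro y hy
      obtain ⟨a, rfl⟩ := Submodule.mem_span_singleton.mp hy
      rw [real_inner_smul_left, horth i, mul_zero]
    have hu' := hKle hu
    rw [Submodule.mem_orthogonal] at hu'
    rw [real_inner_comm]
    exact hu' x (Submodule.mem_span_singleton_self x)
  obtain ⟨V, hV1, hV2⟩ := prod_moved Φ hnz l hl
  have hrange : LinearMap.range T ≤ V := by
    rintro y ⟨x, rfl⟩
    have hTx : T x = (l.prod x - x) - (l.prod 0 - 0) := by
      have h1 : Pl pl x = A x + Pl pl 0 := Pl_affine pl x
      have h2 : A x = Pl pl x - Pl pl 0 := by rw [h1]; abel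
      have h3 : T x = A x - x := by simp [hT, LinearMap.sub_apply]
      rw [h3, h2, hPl]
      abel
    rw [hTx]
    exact Submodule.sub_mem V (hV2 x) (by simpa using hV2 0)
  have e1 := LinearMap.finrank_range_add_finrank_ker T
  have e2 := Submodule.finrank_add_finrank_orthogonal K
  have e3 : Module.finrank ℝ K = m := by
    rw [hK, finrank_span_eq_card hind, Fintype.card_fin]
  have e4 : Module.finrank ℝ (LinearMap.ker T) ≤ Module.finrank ℝ Kᗮ :=
    Submodule.finrank_mono hker
  have e5 : Module.finrank ℝ (LinearMap.range T) ≤ Module.finrank ℝ V :=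
    Submodule.finrank_mono hrange
  have e6 : Module.finrank ℝ (EuclideanSpace ℝ (Fin n)) = n := finrank_euclideanSpace_fin
  rw [e6] at e1 e2
  omega

end AffLen

theorem affine_factorization_with_linearIndependent_roots_is_minimal (n : ℕ) (hn : 1 ≤ n) (Φ : Set (EuclideanSpace ℝ (Fin n))) (hΦ : IsRootSystem n Φ)
    (m : ℕ) (α : Fin m → EuclideanSpace ℝ (Fin n)) (hα : ∀ i, α i ∈ Φ)
    (hind : LinearIndependent ℝ α) (c : Fin m → ℤ)
    (w : Equiv.Perm (EuclideanSpace ℝ (Fin n)))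
    (hw : w = (List.ofFn fun i => affRefl (α i) (c i)).prod) :
    wordLength (affR Φ) w = (m : ℕ∞) := by
  apply le_antisymm
  · apply sInf_le
    refine ⟨List.ofFn fun i => affRefl (α i) (c i), ?_, hw.symm, by simp⟩
    intro r hr
    rw [List.mem_ofFn] at hr
    obtain ⟨i, rfl⟩ := hr
    exact ⟨α i, hα i, c i, rfl⟩
  · apply le_sInf
    rintro b ⟨l, hl, hprod, rfl⟩
    have hkey : m ≤ l.length :=
      AffLen.key Φ hΦ.nonzero m α hα hind c l hl (by rw [hprod, hw])
    exact_mod_cast hkey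

end
end

section
/- Let Φ be a crystallographic root system spanning ℝ^n with coroot lattice L. Then every vector λ ∈ L has integral dimension at most n, and there exists a vector λ ∈ L whose integral dimension is exactly n. -/
open RealInnerProductSpace

noncomputable section

/-- Avoidance lemma: a subgroup whose real span is everything is not covered
by finitely many proper subspaces. -/
lemma avoid_aux {V : Type*} [AddCommGroup V] [Module ℝ V]
    (G : AddSubgroup V) (hG : Submodule.span ℝ (G : Set V) = ⊤)
    (s : Finset (Submodule ℝ V)) (hs : ∀ U ∈ s, U ≠ ⊤) :
    ∃ x ∈ G, ∀ U ∈ s, x ∉ U := by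
  classical
  induction s using Finset.induction_on with
  | empty => exact ⟨0, G.zero_mem, by simp⟩
  | @insert a s ha ih =>
    obtain ⟨x, hxG, hx⟩ := ih (fun U hU => hs U (Finset.mem_insert_of_mem hU))
    have hGa : ¬ (G : Set V) ⊆ (a : Set V) := by
      intro hsub
      have : Submodule.span ℝ (G : Set V) ≤ a := Submodule.span_le.2 hsub
      rw [hG] at this
      exact hs a (Finset.mem_insert_self a s) (top_le_iff.mp this)
    obtain ⟨μ, hμG, hμa⟩ := Set.not_subset.1 hGa
    by_contra hcon
    push_neg at hcon
    -- for each t, pick a bad subspace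
    have hbad : ∀ t : Fin ((insert a s).card + 1),
        ∃ U ∈ insert a s, x + (t : ℕ) • μ ∈ U := by
      intro t
      have hmem : x + (t : ℕ) • μ ∈ G := G.add_mem hxG (G.nsmul_mem hμG _)
      obtain ⟨U, hU, hxU⟩ := hcon _ hmem
      exact ⟨U, hU, hxU⟩
    choose f hf hfmem using hbad
    have hcard : Fintype.card (↥(insert a s)) < Fintype.card (Fin ((insert a s).card + 1)) := by
      simp
    obtain ⟨t, t', hne, heq⟩ := Fintype.exists_ne_map_eq_of_card_lt
      (fun t => (⟨f t, hf t⟩ : ↥(insert a s))) hcard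
    have heqU : f t = f t' := congrArg Subtype.val heq
    set U := f t with hUdef
    have h1 : x + (t : ℕ) • μ ∈ U := hfmem t
    have h2 : x + (t' : ℕ) • μ ∈ U := heqU ▸ hfmem t'
    have hdiff : ((t : ℕ) : ℝ) • μ - ((t' : ℕ) : ℝ) • μ ∈ U := by
      have := U.sub_mem h1 h2
      simpa [Nat.cast_smul_eq_nsmul] using this
    have hμU : μ ∈ U := by
      rw [← sub_smul] at hdiff
      have hc : ((t : ℕ) : ℝ) - ((t' : ℕ) : ℝ) ≠ 0 := by
        have : (t : ℕ) ≠ (t' : ℕ) := fun h => hne (Fin.ext h)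
        exact sub_ne_zero.2 (fun h => this (Nat.cast_injective h))
      have := U.smul_mem (((t : ℕ) : ℝ) - ((t' : ℕ) : ℝ))⁻¹ hdiff
      rwa [inv_smul_smul₀ hc] at this
    rcases Finset.mem_insert.1 (hf t) with h | h
    · exact hμa (h ▸ hμU)
    · have hxU : x ∈ U := by
        have := U.sub_mem h1 (U.smul_mem ((t : ℕ) : ℝ) hμU)
        simpa [Nat.cast_smul_eq_nsmul] using this
      exact hx U h hxU


lemma exists_generic {n : ℕ} (S : Finset (EuclideanSpace ℝ (Fin n)))
    (h0 : (0 : EuclideanSpace ℝ (Fin n)) ∉ S) :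
    ∃ t : EuclideanSpace ℝ (Fin n), ∀ u ∈ S, ⟪t, u⟫ ≠ 0 := by
  classical
  set fam : Finset (Submodule ℝ (EuclideanSpace ℝ (Fin n))) :=
    S.image (fun u => LinearMap.ker (InnerProductSpace.toDual ℝ _ u).toLinearMap) with hfam
  have hfamne : ∀ U ∈ fam, U ≠ ⊤ := by
    intro U hU
    obtain ⟨u, huS, rfl⟩ := Finset.mem_image.1 hU
    intro htop
    have hu0 : u ≠ 0 := fun h => h0 (h ▸ huS)
    have : u ∈ LinearMap.ker (InnerProductSpace.toDual ℝ _ u).toLinearMap := by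
      rw [htop]; trivial
    have : ⟪u, u⟫ = 0 := this
    exact hu0 (inner_self_eq_zero.mp this)
  obtain ⟨t, -, ht⟩ := avoid_aux (⊤ : AddSubgroup (EuclideanSpace ℝ (Fin n)))
    (by simp) fam hfamne
  refine ⟨t, fun u huS h => ?_⟩
  have : t ∈ LinearMap.ker (InnerProductSpace.toDual ℝ _ u).toLinearMap := by
    simp only [LinearMap.mem_ker]
    show ⟪u, t⟫ = 0
    rw [real_inner_comm]; exact h
  exact ht _ (Finset.mem_image_of_mem _ huS) this


variable {n : ℕ} {Φ : Set (EuclideanSpace ℝ (Fin n))}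

lemma inner_self_pos' {α : EuclideanSpace ℝ (Fin n)} (h : α ≠ 0) : 0 < ⟪α, α⟫ :=
  lt_of_le_of_ne real_inner_self_nonneg (fun h0 => h (inner_self_eq_zero.mp h0.symm))

lemma inner_coroot_coroot (α β : EuclideanSpace ℝ (Fin n)) :
    ⟪coroot α, coroot β⟫ = (2 / ⟪α, α⟫) * ((2 / ⟪β, β⟫) * ⟪α, β⟫) := by
  rw [coroot, coroot, real_inner_smul_left, real_inner_smul_right]

lemma neg_mem_Φ (hΦ : IsRootSystem n Φ) {α : EuclideanSpace ℝ (Fin n)} (hα : α ∈ Φ) :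
    -α ∈ Φ := by
  have h := hΦ.reflect_mem α hα α hα
  have ha : ⟪α, α⟫ ≠ 0 := fun h0 => hΦ.nonzero α hα (inner_self_eq_zero.mp h0)
  have h1 : (2 * ⟪α, α⟫ / ⟪α, α⟫) = 2 := by rw [mul_div_assoc, div_self ha, mul_one]
  rw [h1] at h
  have h2 : α - (2 : ℝ) • α = -α := by
    rw [two_smul]; abel
  rwa [h2] at h

lemma coroot_neg (α : EuclideanSpace ℝ (Fin n)) : coroot (-α) = - coroot α := by
  rw [coroot, coroot, inner_neg_neg, smul_neg]

lemma neg_mem_S (hΦ : IsRootSystem n Φ) {u : EuclideanSpace ℝ (Fin n)}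
    (hu : u ∈ coroot '' Φ) : -u ∈ coroot '' Φ := by
  obtain ⟨α, hα, rfl⟩ := hu
  exact ⟨-α, neg_mem_Φ hΦ hα, coroot_neg α⟩

lemma coroot_ne_zero (hΦ : IsRootSystem n Φ) {α : EuclideanSpace ℝ (Fin n)} (hα : α ∈ Φ) :
    coroot α ≠ 0 := by
  have ha : (0:ℝ) < ⟪α, α⟫ := inner_self_pos' (hΦ.nonzero α hα)
  simp only [coroot, ne_eq, smul_eq_zero, not_or]
  exact ⟨by positivity, hΦ.nonzero α hα⟩

/-- Key lemma: the coroot set is closed under subtraction of "acute" pairs. -/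
lemma key_sub (hΦ : IsRootSystem n Φ) {α β : EuclideanSpace ℝ (Fin n)}
    (hα : α ∈ Φ) (hβ : β ∈ Φ) (hne : coroot α ≠ coroot β)
    (hpos : 0 < ⟪coroot α, coroot β⟫) :
    coroot α - coroot β ∈ coroot '' Φ := by
  have ha : (0:ℝ) < ⟪α, α⟫ := inner_self_pos' (hΦ.nonzero α hα)
  have hb : (0:ℝ) < ⟪β, β⟫ := inner_self_pos' (hΦ.nonzero β hβ)
  have hp : (0:ℝ) < ⟪α, β⟫ := by
    rw [inner_coroot_coroot] at hpos
    have h2a : (0:ℝ) < 2 / ⟪α, α⟫ := by positivity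
    have h2b : (0:ℝ) < 2 / ⟪β, β⟫ := by positivity
    by_contra h
    push_neg at h
    have hh1 : 2 / ⟪β, β⟫ * ⟪α, β⟫ ≤ 0 := mul_nonpos_of_nonneg_of_nonpos h2b.le h
    have hh2 : 2 / ⟪α, α⟫ * (2 / ⟪β, β⟫ * ⟪α, β⟫) ≤ 0 :=
      mul_nonpos_of_nonneg_of_nonpos h2a.le hh1
    linarith
  obtain ⟨z₁, hz₁⟩ := hΦ.crystallographic β hβ α hα   -- z₁ = 2⟪α,β⟫/⟪β,β⟫
  obtain ⟨z₂, hz₂⟩ := hΦ.crystallographic α hα β hβ   -- z₂ = 2⟪β,α⟫/⟪α,α⟫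
  have hz₂' : (z₂ : ℝ) = 2 * ⟪α, β⟫ / ⟪α, α⟫ := by rw [hz₂, real_inner_comm]
  have hz₁pos : (0:ℝ) < z₁ := by rw [hz₁]; positivity
  have hz₂pos : (0:ℝ) < z₂ := by rw [hz₂']; positivity
  have hz₁i : 1 ≤ z₁ := by exact_mod_cast hz₁pos
  have hz₂i : 1 ≤ z₂ := by exact_mod_cast hz₂pos
  have hCS : ⟪α, β⟫ * ⟪α, β⟫ ≤ ⟪α, α⟫ * ⟪β, β⟫ := real_inner_mul_inner_self_le α β
  have hprod : (z₁ : ℝ) * z₂ ≤ 4 := by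
    rw [hz₁, hz₂', div_mul_div_comm, div_le_iff₀ (by positivity)]
    nlinarith [hCS]
  by_cases h2 : z₂ = 1
  · -- coroot α - coroot β = coroot (r_β α)
    refine ⟨α - (2 * ⟪α, β⟫ / ⟪β, β⟫) • β, hΦ.reflect_mem β hβ α hα, ?_⟩
    set c := 2 * ⟪α, β⟫ / ⟪β, β⟫ with hc
    set γ := α - c • β with hγ
    have hγγ : ⟪γ, γ⟫ = ⟪α, α⟫ := by
      have hcb : c * ⟪β, β⟫ = 2 * ⟪α, β⟫ := by
        rw [hc]; exact div_mul_cancel₀ _ hb.ne'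
      rw [hγ]
      simp only [inner_sub_sub_self, real_inner_smul_left, real_inner_smul_right]
      linear_combination c * hcb - c * (real_inner_comm α β)
    have h2' : 2 * ⟪α, β⟫ / ⟪α, α⟫ = 1 := by rw [← hz₂', h2]; norm_num
    show coroot γ = coroot α - coroot β
    rw [coroot, hγγ, hγ, smul_sub, smul_smul, coroot, coroot]
    congr 1
    have hkey : 2 / ⟪α, α⟫ * c = (2 * ⟪α, β⟫ / ⟪α, α⟫) * (2 / ⟪β, β⟫) := by
      rw [hc]; ring
    rw [hkey, h2', one_mul]
  · by_cases h1 : z₁ = 1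
    · -- coroot α - coroot β = - coroot (r_α β)
      refine ⟨-(β - (2 * ⟪β, α⟫ / ⟪α, α⟫) • α), neg_mem_Φ hΦ (hΦ.reflect_mem α hα β hβ), ?_⟩
      rw [coroot_neg]
      set c := 2 * ⟪β, α⟫ / ⟪α, α⟫ with hc
      set δ := β - c • α with hδ
      have hδδ : ⟪δ, δ⟫ = ⟪β, β⟫ := by
        have hca : c * ⟪α, α⟫ = 2 * ⟪β, α⟫ := by
          rw [hc]; exact div_mul_cancel₀ _ ha.ne'
        rw [hδ]
        simp only [inner_sub_sub_self, real_inner_smul_left, real_inner_smul_right]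
        linear_combination c * hca - c * (real_inner_comm β α)
      have h1' : 2 * ⟪α, β⟫ / ⟪β, β⟫ = 1 := by rw [← hz₁, h1]; norm_num
      have hcor : coroot δ = coroot β - coroot α := by
        rw [coroot, hδδ, hδ, smul_sub, smul_smul, coroot, coroot]
        congr 1
        have hkey : 2 / ⟪β, β⟫ * c = (2 * ⟪α, β⟫ / ⟪β, β⟫) * (2 / ⟪α, α⟫) := by
          rw [hc, real_inner_comm β α]; ring
        rw [hkey, h1', one_mul]
      rw [hcor]; abel
    · -- z₁, z₂ ≥ 2 : equality in Cauchy-Schwarz, contradiction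
      exfalso
      have hz₁2 : 2 ≤ z₁ := by omega
      have hz₂2 : 2 ≤ z₂ := by omega
      have h4 : (4:ℝ) ≤ (z₁:ℝ) * z₂ := by
        have h4' : (4:ℤ) ≤ z₁ * z₂ := by nlinarith
        exact_mod_cast h4'
      have heq : (z₁:ℝ) * z₂ = 4 := le_antisymm hprod h4
      have hCSeq : ⟪α, β⟫ * ⟪α, β⟫ = ⟪α, α⟫ * ⟪β, β⟫ := by
        rw [hz₁, hz₂', div_mul_div_comm] at heq
        have := (div_eq_iff (by positivity : ⟪β, β⟫ * ⟪α, α⟫ ≠ 0)).1 heq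
        nlinarith [this]
      have hnorm : ⟪α, β⟫ = ‖α‖ * ‖β‖ := by
        have hn1 : ⟪α, α⟫ = ‖α‖ ^ 2 := real_inner_self_eq_norm_sq α
        have hn2 : ⟪β, β⟫ = ‖β‖ ^ 2 := real_inner_self_eq_norm_sq β
        nlinarith [hCSeq, hp, mul_nonneg (norm_nonneg α) (norm_nonneg β)]
      have hsm : ‖β‖ • α = ‖α‖ • β := inner_eq_norm_mul_iff_real.1 hnorm
      have hα0 : ‖α‖ ≠ 0 := norm_ne_zero_iff.2 (hΦ.nonzero α hα)
      have hβα : (‖β‖ / ‖α‖) • α = β := by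
        rw [div_eq_mul_inv, mul_comm, mul_smul, hsm, inv_smul_smul₀ hα0]
      have hmem' : (‖β‖ / ‖α‖) • α ∈ Φ := by rw [hβα]; exact hβ
      have hred := hΦ.reduced α hα (‖β‖ / ‖α‖) hmem'
      have hratpos : 0 < ‖β‖ / ‖α‖ := by
        have : 0 < ‖β‖ := norm_pos_iff.2 (hΦ.nonzero β hβ)
        have : 0 < ‖α‖ := norm_pos_iff.2 (hΦ.nonzero α hα)
        positivity
      rcases hred with h | h
      · rw [h, one_smul] at hβα
        exact hne (by rw [hβα])
      · rw [h] at hratpos; norm_num at hratpos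


lemma indep_of_acute (t : EuclideanSpace ℝ (Fin n)) (Δ : Finset (EuclideanSpace ℝ (Fin n)))
    (hpos : ∀ u ∈ Δ, 0 < ⟪t, u⟫)
    (hpair : ∀ u ∈ Δ, ∀ v ∈ Δ, u ≠ v → ⟪u, v⟫ ≤ 0) :
    LinearIndependent ℝ (fun x : ↥Δ => (x : EuclideanSpace ℝ (Fin n))) := by
  classical
  rw [Fintype.linearIndependent_iff]
  intro g hg
  set P : Finset ↥Δ := Finset.univ.filter (fun i => 0 < g i) with hP
  set N : Finset ↥Δ := Finset.univ.filter (fun i => g i < 0) with hN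
  set w : EuclideanSpace ℝ (Fin n) := ∑ i ∈ P, g i • (i : EuclideanSpace ℝ (Fin n)) with hw
  have hsplit : w + ∑ i ∈ N, g i • (i : EuclideanSpace ℝ (Fin n)) = 0 := by
    have h1 := Finset.sum_filter_add_sum_filter_not Finset.univ (fun i => 0 < g i)
      (fun i => g i • (i : EuclideanSpace ℝ (Fin n)))
    have h2 : ∑ i ∈ Finset.univ.filter (fun i => ¬ 0 < g i), g i • (i : EuclideanSpace ℝ (Fin n))
        = ∑ i ∈ N, g i • (i : EuclideanSpace ℝ (Fin n)) := by
      refine (Finset.sum_subset ?_ ?_).symm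
      · intro i hi
        simp only [hN, Finset.mem_filter, Finset.mem_univ, true_and] at hi ⊢
        exact not_lt.2 hi.le
      · intro i hi hni
        have : g i = 0 := by
          simp only [Finset.mem_filter, Finset.mem_univ, true_and, not_lt] at hi
          simp only [hN, Finset.mem_filter, Finset.mem_univ, true_and, not_lt] at hni
          linarith
        rw [this, zero_smul]
    rw [← h2, hw, h1]
    exact hg
  have hwN : w = ∑ i ∈ N, (-(g i)) • (i : EuclideanSpace ℝ (Fin n)) := by
    have : ∑ i ∈ N, (-(g i)) • (i : EuclideanSpace ℝ (Fin n))
        = - ∑ i ∈ N, g i • (i : EuclideanSpace ℝ (Fin n)) := by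
      rw [← Finset.sum_neg_distrib]
      congr 1; ext i; rw [neg_smul]
    rw [this]; exact eq_neg_of_add_eq_zero_left hsplit
  have hw0 : w = 0 := by
    rw [← real_inner_self_nonpos]
    have hxy : ⟪w, ∑ j ∈ N, (-(g j)) • (j : EuclideanSpace ℝ (Fin n))⟫
        = ∑ i ∈ P, ∑ j ∈ N, g i * ((-(g j)) * ⟪(i : EuclideanSpace ℝ (Fin n)), (j : EuclideanSpace ℝ (Fin n))⟫) := by
      rw [hw, sum_inner]
      refine Finset.sum_congr rfl (fun i _ => ?_)
      rw [real_inner_smul_left, inner_sum, Finset.mul_sum]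
      refine Finset.sum_congr rfl (fun j _ => ?_)
      rw [real_inner_smul_right]
    calc ⟪w, w⟫ = ⟪w, ∑ j ∈ N, (-(g j)) • (j : EuclideanSpace ℝ (Fin n))⟫ := by rw [← hwN]
      _ = ∑ i ∈ P, ∑ j ∈ N, g i * ((-(g j)) * ⟪(i : EuclideanSpace ℝ (Fin n)), (j : EuclideanSpace ℝ (Fin n))⟫) := hxy
      _ ≤ 0 := by
          apply Finset.sum_nonpos
          intro i hiP
          apply Finset.sum_nonpos
          intro j hjN
          have hgi : 0 < g i := (Finset.mem_filter.1 hiP).2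
          have hgj : g j < 0 := (Finset.mem_filter.1 hjN).2
          have hij : (i : EuclideanSpace ℝ (Fin n)) ≠ (j : EuclideanSpace ℝ (Fin n)) := by
            intro h
            have : i = j := Subtype.coe_injective h
            rw [this] at hgi; linarith
          have hinner : ⟪(i : EuclideanSpace ℝ (Fin n)), (j : EuclideanSpace ℝ (Fin n))⟫ ≤ 0 :=
            hpair _ i.2 _ j.2 hij
          have h1 : 0 < -(g j) := by linarith
          have h2 : (-(g j)) * ⟪(i : EuclideanSpace ℝ (Fin n)), (j : EuclideanSpace ℝ (Fin n))⟫ ≤ 0 :=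
            mul_nonpos_of_nonneg_of_nonpos h1.le hinner
          exact mul_nonpos_of_nonneg_of_nonpos hgi.le h2
  have hPempty : P = ∅ := by
    by_contra hne
    have hnonempty : P.Nonempty := Finset.nonempty_of_ne_empty hne
    have : (0:ℝ) < ⟪t, w⟫ := by
      rw [hw, inner_sum]
      apply Finset.sum_pos
      · intro i hiP
        rw [real_inner_smul_right]
        exact mul_pos (Finset.mem_filter.1 hiP).2 (hpos _ i.2)
      · exact hnonempty
    rw [hw0] at this
    simp at this
  have hNempty : N = ∅ := by
    by_contra hne
    have hnonempty : N.Nonempty := Finset.nonempty_of_ne_empty hne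
    have : (0:ℝ) < ⟪t, w⟫ := by
      rw [hwN, inner_sum]
      apply Finset.sum_pos
      · intro i hiN
        rw [real_inner_smul_right]
        have : g i < 0 := (Finset.mem_filter.1 hiN).2
        exact mul_pos (by linarith) (hpos _ i.2)
      · exact hnonempty
    rw [hw0] at this
    simp at this
  intro i
  by_contra hgi
  rcases lt_or_gt_of_ne hgi with h | h
  · have : i ∈ N := by simp [hN, h]
    rw [hNempty] at this; simp at this
  · have : i ∈ P := by simp [hP, h]
    rw [hPempty] at this; simp at this


lemma exists_small_gen (hΦ : IsRootSystem n Φ) :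
    ∃ Δ : Finset (EuclideanSpace ℝ (Fin n)), Δ.card ≤ n ∧
      (↑Δ : Set (EuclideanSpace ℝ (Fin n))) ⊆ coroot '' Φ ∧
      corootLattice Φ ≤ AddSubgroup.closure (Δ : Set (EuclideanSpace ℝ (Fin n))) := by
  classical
  have hSfin : (coroot '' Φ).Finite := hΦ.finite.image _
  set Sfin : Finset (EuclideanSpace ℝ (Fin n)) := hSfin.toFinset with hSfindef
  have hmemS : ∀ u, u ∈ Sfin ↔ u ∈ coroot '' Φ := fun u => hSfin.mem_toFinset
  have h0 : (0 : EuclideanSpace ℝ (Fin n)) ∉ Sfin := by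
    rw [hmemS]
    rintro ⟨α, hα, h⟩
    exact coroot_ne_zero hΦ hα h
  obtain ⟨t, ht⟩ := exists_generic Sfin h0
  set Δ : Finset (EuclideanSpace ℝ (Fin n)) := Sfin.filter
    (fun u => 0 < ⟪t, u⟫ ∧
      ¬∃ v ∈ Sfin, ∃ w ∈ Sfin, 0 < ⟪t, v⟫ ∧ 0 < ⟪t, w⟫ ∧ u = v + w) with hΔdef
  have hΔS : ∀ u ∈ Δ, u ∈ Sfin := fun u hu => (Finset.mem_filter.1 hu).1
  have hΔpos : ∀ u ∈ Δ, 0 < ⟪t, u⟫ := fun u hu => (Finset.mem_filter.1 hu).2.1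
  have hΔind : ∀ u ∈ Δ,
      ¬∃ v ∈ Sfin, ∃ w ∈ Sfin, 0 < ⟪t, v⟫ ∧ 0 < ⟪t, w⟫ ∧ u = v + w :=
    fun u hu => (Finset.mem_filter.1 hu).2.2
  -- pairwise obtuse
  have hpair : ∀ u ∈ Δ, ∀ v ∈ Δ, u ≠ v → ⟪u, v⟫ ≤ 0 := by
    intro u hu v hv hne
    by_contra hposuv
    push_neg at hposuv
    obtain ⟨α, hα, hαu⟩ := (hmemS u).1 (hΔS u hu)
    obtain ⟨β, hβ, hβv⟩ := (hmemS v).1 (hΔS v hv)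
    have hsub : u - v ∈ coroot '' Φ := by
      rw [← hαu, ← hβv]
      exact key_sub hΦ hα hβ (by rw [hαu, hβv]; exact hne) (by rw [hαu, hβv]; exact hposuv)
    have hsubS : u - v ∈ Sfin := (hmemS _).2 hsub
    have hsubne := ht _ hsubS
    rcases hsubne.lt_or_gt with hlt | hgt
    · -- ⟪t, u-v⟫ < 0 : v decomposes
      have hvu : v - u ∈ Sfin := by
        rw [hmemS]
        have := neg_mem_S hΦ hsub
        rwa [neg_sub] at this
      refine hΔind v hv ⟨u, hΔS u hu, v - u, hvu, hΔpos u hu, ?_, by abel⟩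
      rw [inner_sub_right]
      rw [inner_sub_right] at hlt
      linarith
    · -- ⟪t, u-v⟫ > 0 : u decomposes
      refine hΔind u hu ⟨v, hΔS v hv, u - v, hsubS, hΔpos v hv, hgt, by abel⟩
  -- cardinality bound
  have hcard : Δ.card ≤ n := by
    have hli := indep_of_acute t Δ hΔpos hpair
    have := hli.fintype_card_le_finrank
    rwa [finrank_euclideanSpace_fin, Fintype.card_coe] at this
  -- monoid closure
  set m : EuclideanSpace ℝ (Fin n) → ℕ := fun u =>
    (Sfin.filter (fun w => 0 < ⟪t, w⟫ ∧ ⟪t, w⟫ ≤ ⟪t, u⟫)).card with hmdef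
  have key : ∀ N : ℕ, ∀ u, u ∈ Sfin → 0 < ⟪t, u⟫ → m u ≤ N →
      u ∈ AddSubmonoid.closure (Δ : Set (EuclideanSpace ℝ (Fin n))) := by
    intro N
    induction N with
    | zero =>
      intro u huS hupos hm
      exfalso
      have hmemf : u ∈ Sfin.filter (fun w => 0 < ⟪t, w⟫ ∧ ⟪t, w⟫ ≤ ⟪t, u⟫) :=
        Finset.mem_filter.2 ⟨huS, hupos, le_refl _⟩
      have hcardpos : 0 < m u := Finset.card_pos.2 ⟨u, hmemf⟩
      omega
    | succ N ih =>
      intro u huS hupos hm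
      by_cases hdec : ∃ v ∈ Sfin, ∃ w ∈ Sfin, 0 < ⟪t, v⟫ ∧ 0 < ⟪t, w⟫ ∧ u = v + w
      · obtain ⟨v, hvS, w, hwS, hvpos, hwpos, huvw⟩ := hdec
        have htu : ⟪t, u⟫ = ⟪t, v⟫ + ⟪t, w⟫ := by rw [huvw, inner_add_right]
        have hlt : ∀ x, x ∈ Sfin → 0 < ⟪t, x⟫ → ⟪t, x⟫ < ⟪t, u⟫ → m x < m u := by
          intro x hxS hxpos hxlt
          apply Finset.card_lt_card
          constructor
          · intro y hy
            rw [Finset.mem_filter] at hy ⊢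
            exact ⟨hy.1, hy.2.1, le_trans hy.2.2 hxlt.le⟩
          · intro hsub
            have hu1 : u ∈ Sfin.filter (fun w => 0 < ⟪t, w⟫ ∧ ⟪t, w⟫ ≤ ⟪t, u⟫) :=
              Finset.mem_filter.2 ⟨huS, hupos, le_refl _⟩
            have hu2 := hsub hu1
            rw [Finset.mem_filter] at hu2
            linarith [hu2.2.2]
        have hmv := hlt v hvS hvpos (by linarith)
        have hmw := hlt w hwS hwpos (by linarith)
        rw [huvw]
        exact AddSubmonoid.add_mem _ (ih v hvS hvpos (by omega)) (ih w hwS hwpos (by omega))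
      · exact AddSubmonoid.subset_closure
          (Finset.mem_coe.2 (Finset.mem_filter.2 ⟨huS, hupos, hdec⟩))
  refine ⟨Δ, hcard, ?_, ?_⟩
  · intro u hu
    exact (hmemS u).1 (hΔS u (Finset.mem_coe.1 hu))
  · rw [corootLattice]
    refine (AddSubgroup.closure_le _).2 ?_
    intro u hu
    have huS : u ∈ Sfin := (hmemS u).2 hu
    have hmono : AddSubmonoid.closure (Δ : Set (EuclideanSpace ℝ (Fin n)))
        ≤ (AddSubgroup.closure (Δ : Set (EuclideanSpace ℝ (Fin n)))).toAddSubmonoid :=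
      AddSubmonoid.closure_le.2 AddSubgroup.subset_closure
    rcases (ht u huS).lt_or_gt with hneg | hpos
    · have hnegu : -u ∈ Sfin := (hmemS _).2 (neg_mem_S hΦ hu)
      have : -u ∈ AddSubmonoid.closure (Δ : Set (EuclideanSpace ℝ (Fin n))) := by
        apply key (m (-u)) (-u) hnegu _ (le_refl _)
        rw [inner_neg_right]
        linarith
      have h2 : -u ∈ AddSubgroup.closure (Δ : Set (EuclideanSpace ℝ (Fin n))) := hmono this
      have := AddSubgroup.neg_mem _ h2
      rwa [neg_neg] at this
    · exact hmono (key (m u) u huS hpos (le_refl _))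


theorem intDim_le_and_exists_max (n : ℕ) (hn : 1 ≤ n) (Φ : Set (EuclideanSpace ℝ (Fin n))) (hΦ : IsRootSystem n Φ) :
    (∀ lam ∈ corootLattice Φ, intDim Φ lam ≤ n) ∧
    ∃ lam ∈ corootLattice Φ, intDim Φ lam = n := by
  classical
  obtain ⟨Δ, hcard, hΔsub, hle⟩ := exists_small_gen hΦ
  -- every lattice element lies in the `k = Δ.card` part of the defining set
  have hmem_set : ∀ lam ∈ corootLattice Φ,
      Δ.card ∈ {k : ℕ | ∃ (c : Fin k → ℤ) (α : Fin k → EuclideanSpace ℝ (Fin n)),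
        (∀ i, α i ∈ Φ) ∧ lam = ∑ i, c i • coroot (α i)} := by
    intro lam hlam
    have h1 : lam ∈ Submodule.span ℤ (Δ : Set (EuclideanSpace ℝ (Fin n))) := by
      have := hle hlam
      rwa [← Submodule.span_int_eq_addSubgroupClosure] at this
    obtain ⟨f, -, hf⟩ := Submodule.mem_span_finset.1 h1
    set e := Δ.equivFin with he
    have hroot : ∀ x : ↥Δ, ∃ α, α ∈ Φ ∧ coroot α = (x : EuclideanSpace ℝ (Fin n)) := by
      intro x
      obtain ⟨α, hα, hcor⟩ := hΔsub x.2
      exact ⟨α, hα, hcor⟩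
    choose root hrootΦ hrootcor using hroot
    refine ⟨fun i => f ↑(e.symm i), fun i => root (e.symm i), fun i => hrootΦ _, ?_⟩
    have h2 : ∀ i : Fin Δ.card, (fun i => f ↑(e.symm i)) i • coroot (root (e.symm i))
        = f ↑(e.symm i) • (↑(e.symm i) : EuclideanSpace ℝ (Fin n)) := by
      intro i; rw [hrootcor]
    rw [Finset.sum_congr rfl (fun i _ => h2 i)]
    have h3 : ∑ i : Fin Δ.card, f ↑(e.symm i) • (↑(e.symm i) : EuclideanSpace ℝ (Fin n))
        = ∑ x : ↥Δ, f ↑x • (↑x : EuclideanSpace ℝ (Fin n)) :=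
      Equiv.sum_comp e.symm (fun x : ↥Δ => f ↑x • (↑x : EuclideanSpace ℝ (Fin n)))
    rw [h3]
    rw [Finset.sum_coe_sort Δ (fun i => f i • i)]
    exact hf.symm
  have part1 : ∀ lam ∈ corootLattice Φ, intDim Φ lam ≤ n := by
    intro lam hlam
    exact le_trans (Nat.sInf_le (hmem_set lam hlam)) hcard
  refine ⟨part1, ?_⟩
  -- construct a lattice vector avoiding all proper coroot spans
  have hSfin : (coroot '' Φ).Finite := hΦ.finite.image _
  set Sfin : Finset (EuclideanSpace ℝ (Fin n)) := hSfin.toFinset with hSfindef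
  set family : Finset (Submodule ℝ (EuclideanSpace ℝ (Fin n))) :=
    (Sfin.powerset.image (fun T : Finset (EuclideanSpace ℝ (Fin n)) =>
      Submodule.span ℝ (↑T : Set (EuclideanSpace ℝ (Fin n))))).filter
      (fun U => U ≠ ⊤) with hfamily
  have hfam_ne : ∀ U ∈ family, U ≠ ⊤ := fun U hU => (Finset.mem_filter.1 hU).2
  have hspanS : Submodule.span ℝ (coroot '' Φ) = ⊤ := by
    rw [eq_top_iff, ← hΦ.spans]
    apply Submodule.span_le.2
    intro α hα
    have ha : (0:ℝ) < ⟪α, α⟫ := inner_self_pos' (hΦ.nonzero α hα)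
    have hcor : (⟪α, α⟫ / 2) • coroot α = α := by
      rw [coroot, smul_smul]
      have h1 : ⟪α, α⟫ / 2 * (2 / ⟪α, α⟫) = 1 := by
        rw [div_mul_div_comm, mul_comm, div_self (by positivity : (2:ℝ) * ⟪α, α⟫ ≠ 0)]
      rw [h1, one_smul]
    rw [← hcor]
    exact Submodule.smul_mem _ _ (Submodule.subset_span ⟨α, hα, rfl⟩)
  have hspanG : Submodule.span ℝ ((corootLattice Φ : Set (EuclideanSpace ℝ (Fin n)))) = ⊤ := by
    rw [eq_top_iff, ← hspanS]
    exact Submodule.span_mono AddSubgroup.subset_closure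
  obtain ⟨lam, hlamG, hlam⟩ := avoid_aux (corootLattice Φ) hspanG family hfam_ne
  refine ⟨lam, hlamG, ?_⟩
  have hlb : ∀ k ∈ {k : ℕ | ∃ (c : Fin k → ℤ) (α : Fin k → EuclideanSpace ℝ (Fin n)),
      (∀ i, α i ∈ Φ) ∧ lam = ∑ i, c i • coroot (α i)}, n ≤ k := by
    rintro k ⟨c, αf, hαf, hsum⟩
    by_contra hlt
    push_neg at hlt
    set T : Finset (EuclideanSpace ℝ (Fin n)) :=
      Finset.image (fun i => coroot (αf i)) Finset.univ with hT
    set U : Submodule ℝ (EuclideanSpace ℝ (Fin n)) := Submodule.span ℝ (T : Set (EuclideanSpace ℝ (Fin n))) with hU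
    have hTcoe : (T : Set (EuclideanSpace ℝ (Fin n))) = Set.range (fun i => coroot (αf i)) := by
      rw [hT, Finset.coe_image, Finset.coe_univ, Set.image_univ]
    have hUne : U ≠ ⊤ := by
      intro htop
      have h1 : Module.finrank ℝ U ≤ k := by
        rw [hU, hTcoe]
        exact le_trans (finrank_range_le_card _) (by simp)
      rw [htop, finrank_top, finrank_euclideanSpace_fin] at h1
      omega
    have hUfam : U ∈ family := by
      rw [hfamily, Finset.mem_filter]
      refine ⟨Finset.mem_image.2 ⟨T, ?_, rfl⟩, hUne⟩
      rw [Finset.mem_powerset]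
      intro x hx
      obtain ⟨i, _, rfl⟩ := Finset.mem_image.1 hx
      rw [hSfindef, hSfin.mem_toFinset]
      exact ⟨αf i, hαf i, rfl⟩
    have hlamU : lam ∈ U := by
      rw [hsum]
      apply Submodule.sum_mem
      intro i _
      have hmem : coroot (αf i) ∈ U :=
        Submodule.subset_span (by
          rw [hTcoe]; exact ⟨i, rfl⟩)
      exact U.toAddSubgroup.zsmul_mem hmem (c i)
    exact hlam U hUfam hlamU
  have hk0 := hmem_set lam hlamG
  have hkn : Δ.card = n := le_antisymm hcard (hlb _ hk0)
  have hnmem := hk0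
  rw [hkn] at hnmem
  rw [intDim]
  exact le_antisymm (Nat.sInf_le hnmem) (le_csInf ⟨Δ.card, hk0⟩ hlb)


end
end
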